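/- arXiv:1912.03409 — 3 statements merged into one kernel-verified Lean document; each statement's English description precedes it below -/
import Mathlib

section
/- Suppose the cocycle (ψ,ϑ) is σ-periodic and (H1), (H2) with j = 1, (H3) and (COM3) hold. Then for any semi-trajectory u(t) := ψ^t(q,u₀), t ≥ 0, with bounded image there exists a σ-periodic trajectory u* at q such that u(t) − u*(t) → 0 as t → +∞. -/
open MeasureTheory Set Bornology Filter Topology RealInnerProductSpace

noncomputable section

variable {Q H : Type*}

section Defs
variable [MetricSpace Q] [NormedAddCommGroup H] [InnerProductSpace ℝ H] [CompleteSpace H]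

def IsFlow (ϑ : ℝ → Q → Q) : Prop :=
  (∀ q, ϑ 0 q = q) ∧ (∀ t s q, ϑ (t + s) q = ϑ t (ϑ s q)) ∧
    Continuous fun p : ℝ × Q => ϑ p.1 p.2

def IsCocycle (ϑ : ℝ → Q → Q) (ψ : ℝ → Q → H → H) : Prop :=
  (∀ q u, ψ 0 q u = u) ∧
  (∀ t s : ℝ, 0 ≤ t → 0 ≤ s → ∀ q u, ψ (t + s) q u = ψ t (ϑ s q) (ψ s q u)) ∧
  ContinuousOn (fun p : ℝ × Q × H => ψ p.1 p.2.1 p.2.2) {p : ℝ × Q × H | 0 ≤ p.1}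

def IsCompleteTraj (ϑ : ℝ → Q → Q) (ψ : ℝ → Q → H → H) (q : Q) (u : ℝ → H) : Prop :=
  Continuous u ∧ ∀ t s : ℝ, 0 ≤ t → u (t + s) = ψ t (ϑ s q) (u s)

def IsAmenable (ν : ℝ) (u : ℝ → H) : Prop :=
  IntegrableOn (fun s : ℝ => Real.exp (2 * ν * s) * ‖u s‖ ^ 2) (Set.Iic (0:ℝ))

def amenSet (ϑ : ℝ → Q → Q) (ψ : ℝ → Q → H → H) (ν : ℝ) (q : Q) : Set H :=
  {u₀ | ∃ u : ℝ → H, IsCompleteTraj ϑ ψ q u ∧ IsAmenable ν u ∧ u 0 = u₀}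

structure HypH1 (P : H →L[ℝ] H) (Hplus Hminus : Submodule ℝ H) : Prop where
  selfAdj : IsSelfAdjoint P
  closed_plus : IsClosed (Hplus : Set H)
  orth : Hminus = Hplusᗮ
  inv_plus : ∀ u ∈ Hplus, P u ∈ Hplus
  inv_minus : ∀ u ∈ Hminus, P u ∈ Hminus
  pos : ∀ u ∈ Hplus, u ≠ 0 → (0:ℝ) < ⟪P u, u⟫
  neg : ∀ u ∈ Hminus, u ≠ 0 → ⟪P u, u⟫ < 0

def HypH2 (Hminus : Submodule ℝ H) (j : ℕ) : Prop :=
  FiniteDimensional ℝ Hminus ∧ Module.finrank ℝ Hminus = j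

def HypH3 (ψ : ℝ → Q → H → H) (P : H →L[ℝ] H) (δ ν : ℝ) : Prop :=
  0 < δ ∧ 0 < ν ∧ ∀ (q : Q) (u v : H) (l r : ℝ), 0 ≤ l → l ≤ r →
    Real.exp (2 * ν * r) * ⟪P (ψ r q u - ψ r q v), ψ r q u - ψ r q v⟫ -
      Real.exp (2 * ν * l) * ⟪P (ψ l q u - ψ l q v), ψ l q u - ψ l q v⟫ ≤
      -δ * ∫ s in l..r, Real.exp (2 * ν * s) * ‖ψ s q u - ψ s q v‖ ^ 2

def IsOrthProjOnto (Hminus : Submodule ℝ H) (Pi : H →L[ℝ] H) : Prop :=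
  (∀ u, Pi u ∈ Hminus) ∧ ∀ u, u - Pi u ∈ Hminusᗮ

def HypCOM2 (ψ : ℝ → Q → H → H) : Prop :=
  ∃ tc : ℝ, 0 < tc ∧ ∀ (q : Q) (s : Set H), IsBounded s → IsCompact (closure (ψ tc q '' s))

def HypCOM3 (ψ : ℝ → Q → H → H) : Prop :=
  ∀ (q : Q) (u₀ : H), IsBounded ((fun t => ψ t q u₀) '' Set.Ici (0:ℝ)) →
    IsCompact (closure ((fun t => ψ t q u₀) '' Set.Ici (0:ℝ)))

def LyapunovStable (ψ : ℝ → Q → H → H) (q : Q) (v : ℝ → H) : Prop :=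
  ∀ ε > 0, ∃ η > 0, ∀ u₀ : H, ‖u₀ - v 0‖ < η → ∀ t ≥ 0, ‖ψ t q u₀ - v t‖ < ε

end Defs

def circleFlow (σ : ℝ) : ℝ → AddCircle σ → AddCircle σ := fun t θ => θ + (t : AddCircle σ)

namespace ConvAux

variable {H : Type*} [NormedAddCommGroup H]

/-- The set of cluster points of the sequence `a`. -/
def omegaSet (a : ℕ → H) : Set H :=
  {x | ∀ ε > 0, ∀ N : ℕ, ∃ n ≥ N, ‖a n - x‖ < ε}

lemma mem_omegaSet_of_subseq {a : ℕ → H} {x : H} {φ : ℕ → ℕ} (hφ : ∀ i, i ≤ φ i)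
    (h : Tendsto (fun i => a (φ i)) atTop (𝓝 x)) : x ∈ omegaSet a := by
  intro ε hε N
  have h' := (Metric.tendsto_atTop.1 h) ε hε
  obtain ⟨M, hM⟩ := h'
  refine ⟨φ (max M N), le_trans (le_max_right M N) (hφ _), ?_⟩
  have := hM (max M N) (le_max_left M N)
  simpa [dist_eq_norm] using this

lemma omegaSet_subset_closed {a : ℕ → H} {C : Set H} (hC : IsClosed C) (ha : ∀ n, a n ∈ C) :
    omegaSet a ⊆ C := by
  intro x hx
  have : ∀ ε > 0, ∃ y ∈ C, dist x y < ε := by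
    intro ε hε
    obtain ⟨n, -, hn⟩ := hx ε hε 0
    exact ⟨a n, ha n, by simpa [dist_eq_norm, norm_sub_rev] using hn⟩
  have hmem : x ∈ closure C := Metric.mem_closure_iff.2 (by
    intro ε hε; obtain ⟨y, hy, hd⟩ := this ε hε; exact ⟨y, hy, hd⟩)
  rwa [hC.closure_eq] at hmem

lemma omegaSet_nonempty {a : ℕ → H} {K : Set H} (hK : IsCompact K) (ha : ∀ n, a n ∈ K) :
    (omegaSet a).Nonempty := by
  obtain ⟨x, -, φ, hφ, hlim⟩ := hK.tendsto_subseq ha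
  exact ⟨x, mem_omegaSet_of_subseq (fun i => (hφ.le_apply)) hlim⟩

/-- the sequence is attracted to its omega-limit set -/
lemma omegaSet_attract {a : ℕ → H} {K : Set H} (hK : IsCompact K) (ha : ∀ n, a n ∈ K) :
    ∀ γ > 0, ∃ N : ℕ, ∀ n ≥ N, ∃ w ∈ omegaSet a, ‖a n - w‖ < γ := by
  intro γ hγ
  by_contra hcon
  push_neg at hcon
  choose n hn hfar using hcon
  obtain ⟨y, -, φ, hφ, hlim⟩ := hK.tendsto_subseq (x := fun j => a (n j)) (fun j => ha _)
  have hyω : y ∈ omegaSet a := by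
    refine mem_omegaSet_of_subseq (φ := fun j => n (φ j)) (fun i => ?_) hlim
    exact le_trans (hφ.le_apply) (hn (φ i))
  obtain ⟨M, hM⟩ := Metric.tendsto_atTop.1 hlim γ hγ
  have := hfar (φ M) y hyω
  have h2 := hM M le_rfl
  simp only [Function.comp_apply, dist_eq_norm] at h2
  exact absurd h2 (not_lt.2 this)

lemma omegaSet_surj {a : ℕ → H} {K : Set H} (hK : IsCompact K) (ha : ∀ n, a n ∈ K)
    {T : H → H} (hT : Continuous T) (hrec : ∀ n, a (n + 1) = T (a n)) :
    ∀ x ∈ omegaSet a, ∃ z ∈ omegaSet a, T z = x := by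
  intro x hx
  have hsel : ∀ j : ℕ, ∃ n ≥ j + 1, ‖a n - x‖ < 1 / (j + 1) := by
    intro j
    exact hx (1 / (j + 1)) (by positivity) (j + 1)
  choose n hn hnear using hsel
  obtain ⟨z, -, φ, hφ, hlim⟩ := hK.tendsto_subseq (x := fun j => a (n j - 1)) (fun j => ha _)
  have hz : z ∈ omegaSet a := by
    refine mem_omegaSet_of_subseq (φ := fun j => n (φ j) - 1) (fun i => ?_) hlim
    show i ≤ n (φ i) - 1
    have h1 : φ i + 1 ≤ n (φ i) := hn (φ i)
    have h2 : i ≤ φ i := hφ.le_apply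
    omega
  refine ⟨z, hz, ?_⟩
  have hTlim : Tendsto (fun j => T (a (n (φ j) - 1))) atTop (𝓝 (T z)) :=
    (hT.tendsto z).comp hlim
  have heq : ∀ j, T (a (n (φ j) - 1)) = a (n (φ j)) := by
    intro j
    have h1 : n (φ j) - 1 + 1 = n (φ j) := by have := hn (φ j); omega
    have h2 := hrec (n (φ j) - 1)
    rw [h1] at h2
    exact h2.symm
  have hTlim' : Tendsto (fun j => a (n (φ j))) atTop (𝓝 (T z)) := by
    simpa only [heq] using hTlim
  have h0 : Tendsto (fun j : ℕ => (1:ℝ) / (j + 1)) atTop (𝓝 0) :=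
    tendsto_one_div_add_atTop_nhds_zero_nat
  have h0' : Tendsto (fun j => (1:ℝ) / (φ j + 1)) atTop (𝓝 0) := h0.comp hφ.tendsto_atTop
  have hsq : Tendsto (fun j => a (n (φ j)) - x) atTop (𝓝 0) :=
    squeeze_zero_norm (fun j => (hnear (φ j)).le) h0'
  have hxlim : Tendsto (fun j => a (n (φ j))) atTop (𝓝 x) := tendsto_sub_nhds_zero_iff.1 hsq
  exact tendsto_nhds_unique hTlim' hxlim

/-- Key monotonicity trap lemma. -/
lemma trap_lemma {a : ℕ → H} {K : Set H} (hK : IsCompact K) (ha : ∀ n, a n ∈ K)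
    {T : H → H} (hT : Continuous T) (hrec : ∀ n, a (n + 1) = T (a n))
    {f : H → ℝ} (hfc : Continuous f) (hflip : ∀ p z : H, |f p - f z| ≤ ‖p - z‖)
    {x : H} (hx : x ∈ omegaSet a)
    (hinj : ∀ z ∈ omegaSet a, f z = f x → z = x)
    (hord : ∀ z ∈ omegaSet a, f x < f z → f (T x) < f (T z)) :
    f (T x) ≤ f x := by
  by_contra hcon
  push_neg at hcon
  set c := f x with hc
  set d := f (T x) with hd
  set D := d - c with hD
  have hDpos : 0 < D := by simp only [hD]; linarith
  set ε := D / 4 with hε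
  have hεpos : 0 < ε := by positivity
  have hωK : omegaSet a ⊆ K := omegaSet_subset_closed hK.isClosed ha
  have hκ : ∃ κ > 0, ∀ z ∈ omegaSet a, c - κ ≤ f z → d - ε ≤ f (T z) := by
    by_contra hno
    push_neg at hno
    have hsel : ∀ j : ℕ, ∃ z ∈ omegaSet a, c - 1 / (j + 1) ≤ f z ∧ f (T z) < d - ε := by
      intro j
      obtain ⟨z, hz, h1, h2⟩ := hno (1 / (j + 1)) (by positivity)
      exact ⟨z, hz, h1, h2⟩
    choose z hzω hz1 hz2 using hsel
    obtain ⟨z0, -, φ, hφ, hlim⟩ := hK.tendsto_subseq (x := z) (fun j => hωK (hzω j))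
    have hz0ω : z0 ∈ omegaSet a := by
      intro ε' hε' N
      obtain ⟨M, hM⟩ := Metric.tendsto_atTop.1 hlim (ε' / 2) (by linarith)
      obtain ⟨n, hn, hn2⟩ := hzω (φ M) (ε' / 2) (by linarith) N
      refine ⟨n, hn, ?_⟩
      have h1 : ‖z (φ M) - z0‖ < ε' / 2 := by
        have := hM M le_rfl; simpa [dist_eq_norm] using this
      calc ‖a n - z0‖ ≤ ‖a n - z (φ M)‖ + ‖z (φ M) - z0‖ := by
            simpa using norm_sub_le_norm_sub_add_norm_sub (a n) (z (φ M)) z0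
        _ < ε' := by linarith
    have hfz : ∀ j, f (z j) ≤ c := by
      intro j
      by_contra hgt
      push_neg at hgt
      have h1 := hord _ (hzω j) hgt
      have h2 := hz2 j
      linarith
    have hflim : Tendsto (fun i => f (z (φ i))) atTop (𝓝 (f z0)) := (hfc.tendsto z0).comp hlim
    have hfz0 : f z0 = c := by
      have hup : f z0 ≤ c := le_of_tendsto hflim (Eventually.of_forall fun i => hfz (φ i))
      have haux : Tendsto (fun i : ℕ => c - 1 / (φ i + 1)) atTop (𝓝 c) := by
        have h0 : Tendsto (fun j : ℕ => (1:ℝ) / (j + 1)) atTop (𝓝 0) :=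
          tendsto_one_div_add_atTop_nhds_zero_nat
        have h1 := (tendsto_const_nhds (x := c) (f := atTop (α := ℕ))).sub (h0.comp hφ.tendsto_atTop)
        simpa using h1
      have hlow : c ≤ f z0 := le_of_tendsto_of_tendsto' haux hflim (fun i => hz1 (φ i))
      linarith
    have hz0x : z0 = x := hinj _ hz0ω hfz0
    have hTlim : Tendsto (fun i => f (T (z (φ i)))) atTop (𝓝 (f (T z0))) :=
      ((hfc.comp hT).tendsto z0).comp hlim
    have hTle : f (T z0) ≤ d - ε :=
      le_of_tendsto hTlim (Eventually.of_forall fun i => (hz2 (φ i)).le)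
    rw [hz0x, ← hd] at hTle
    linarith
  obtain ⟨κ, hκpos, hκprop⟩ := hκ
  obtain ⟨γ₀, hγ₀pos, hγ₀⟩ := Metric.uniformContinuousOn_iff.1
    (hK.uniformContinuousOn_of_continuous hT.continuousOn) ε hεpos
  set γ := min γ₀ (κ / 2) with hγ
  have hγpos : 0 < γ := lt_min hγ₀pos (by positivity)
  obtain ⟨N₁, hN₁⟩ := omegaSet_attract hK ha γ hγpos
  have hγκ : γ ≤ κ / 2 := min_le_right _ _
  have hγγ₀ : γ ≤ γ₀ := min_le_left _ _
  have step : ∀ n, N₁ ≤ n → c - κ / 2 ≤ f (a n) → c + D / 2 ≤ f (a (n + 1)) := by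
    intro n hn hfn
    obtain ⟨w, hwω, hwnear⟩ := hN₁ n hn
    have h2 : |f (a n) - f w| ≤ ‖a n - w‖ := hflip _ _
    have hfw : c - κ ≤ f w := by
      have h3 : f (a n) - f w ≤ |f (a n) - f w| := le_abs_self _
      have h4 : ‖a n - w‖ < κ / 2 := lt_of_lt_of_le hwnear hγκ
      linarith
    have hTw : d - ε ≤ f (T w) := hκprop w hwω hfw
    have hdist : dist (T (a n)) (T w) < ε := by
      refine hγ₀ (a n) (ha n) w (hωK hwω) ?_
      rw [dist_eq_norm]
      exact lt_of_lt_of_le hwnear hγγ₀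
    have h4 : |f (T (a n)) - f (T w)| ≤ ‖T (a n) - T w‖ := hflip _ _
    have h5 : ‖T (a n) - T w‖ < ε := by rwa [dist_eq_norm] at hdist
    have habs := abs_lt.1 (lt_of_le_of_lt h4 h5)
    rw [hrec n]
    have h6 : d - 2 * ε ≤ f (T (a n)) := by linarith [habs.1]
    have : c + D / 2 = d - 2 * ε := by rw [hε, hD]; ring
    linarith
  obtain ⟨n₀, hn₀N, hn₀x⟩ := hx (κ / 2) (by positivity) N₁
  have hstart : c - κ / 2 ≤ f (a n₀) := by
    have h2 : |f (a n₀) - c| ≤ ‖a n₀ - x‖ := hflip (a n₀) x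
    have h3 := abs_le.1 h2
    linarith [h3.1]
  have hall : ∀ m, n₀ + 1 ≤ m → c + D / 2 ≤ f (a m) := by
    intro m hm
    refine Nat.le_induction ?_ ?_ m hm
    · exact step n₀ hn₀N hstart
    · intro m hm' ih
      refine step m (le_trans hn₀N (by omega)) (by linarith)
  obtain ⟨m, hm, hmx⟩ := hx (D / 4) (by positivity) (n₀ + 1)
  have h1 := hall m hm
  have h2 : |f (a m) - c| ≤ ‖a m - x‖ := hflip (a m) x
  have h3 := abs_le.1 h2
  linarith [h3.2]

lemma not_two_point {a : ℕ → H} {K : Set H} (hK : IsCompact K) (ha : ∀ n, a n ∈ K)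
    {T : H → H} (hT : Continuous T) (hrec : ∀ n, a (n + 1) = T (a n))
    {x y : H} (hx : x ∈ omegaSet a) (hy : y ∈ omegaSet a) (hxy : x ≠ y)
    (hsub : ∀ w ∈ omegaSet a, w = x ∨ w = y) (hfix : T x = x) : False := by
  have hωK : omegaSet a ⊆ K := omegaSet_subset_closed hK.isClosed ha
  set ε₀ := ‖x - y‖ / 3 with hε₀
  have hε₀pos : 0 < ε₀ := by
    have : x - y ≠ 0 := sub_ne_zero.2 hxy
    have := norm_pos_iff.2 this
    positivity
  obtain ⟨γ₀, hγ₀pos, hγ₀⟩ := Metric.uniformContinuousOn_iff.1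
    (hK.uniformContinuousOn_of_continuous hT.continuousOn) ε₀ hε₀pos
  set γ := min γ₀ ε₀ with hγ
  have hγpos : 0 < γ := lt_min hγ₀pos hε₀pos
  obtain ⟨N₁, hN₁⟩ := omegaSet_attract hK ha (γ / 2) (by positivity)
  have step : ∀ n, N₁ ≤ n → ‖a n - x‖ < γ → ‖a (n + 1) - x‖ < γ ∧ ‖a (n + 1) - x‖ < ε₀ := by
    intro n hn hnear
    have hd1 : dist (T (a n)) (T x) < ε₀ := by
      refine hγ₀ (a n) (ha n) x (hωK hx) ?_
      rw [dist_eq_norm]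
      exact lt_of_lt_of_le hnear (min_le_left _ _)
    have hb : ‖a (n + 1) - x‖ < ε₀ := by
      rw [hrec n, ← hfix, ← dist_eq_norm]
      exact hd1
    obtain ⟨w, hwω, hwnear⟩ := hN₁ (n + 1) (by omega)
    rcases hsub w hwω with rfl | rfl
    · exact ⟨lt_of_lt_of_le hwnear (by linarith), hb⟩
    · exfalso
      have h1 : ‖x - w‖ ≤ ‖x - a (n + 1)‖ + ‖a (n + 1) - w‖ :=
        norm_sub_le_norm_sub_add_norm_sub x (a (n + 1)) w
      have h2 : ‖x - a (n + 1)‖ = ‖a (n + 1) - x‖ := norm_sub_rev _ _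
      have h3 : ‖x - w‖ = 3 * ε₀ := by rw [hε₀]; ring
      have h4 : γ / 2 ≤ ε₀ := le_trans (by linarith [hγpos, min_le_right γ₀ ε₀]) le_rfl
      linarith
  obtain ⟨n₀, hn₀N, hn₀x⟩ := hx γ hγpos N₁
  have hall : ∀ m, n₀ + 1 ≤ m → ‖a m - x‖ < γ ∧ ‖a m - x‖ < ε₀ := by
    intro m hm
    refine Nat.le_induction ?_ ?_ m hm
    · exact step n₀ hn₀N hn₀x
    · intro m hm' ih
      exact step m (le_trans hn₀N (by omega)) ih.1
  obtain ⟨m, hm, hmy⟩ := hy ε₀ hε₀pos (n₀ + 1)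
  have h1 := (hall m hm).2
  have h2 : ‖x - y‖ ≤ ‖x - a m‖ + ‖a m - y‖ := norm_sub_le_norm_sub_add_norm_sub x (a m) y
  have h3 : ‖x - a m‖ = ‖a m - x‖ := norm_sub_rev _ _
  have h4 : ‖x - y‖ = 3 * ε₀ := by rw [hε₀]; ring
  linarith

lemma tendsto_of_omegaSet_subsingleton {a : ℕ → H} {K : Set H} (hK : IsCompact K)
    (ha : ∀ n, a n ∈ K) {x : H} (hsub : ∀ w ∈ omegaSet a, w = x) :
    Tendsto a atTop (𝓝 x) := by
  rw [Metric.tendsto_atTop]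
  by_contra hcon
  push_neg at hcon
  obtain ⟨ε, hε, hfar⟩ := hcon
  have hsel : ∀ N : ℕ, ∃ n ≥ N, ε ≤ dist (a n) x := hfar
  choose n hn hd using hsel
  obtain ⟨y, -, φ, hφ, hlim⟩ := hK.tendsto_subseq (x := fun j => a (n j)) (fun j => ha _)
  have hyω : y ∈ omegaSet a := by
    refine mem_omegaSet_of_subseq (φ := fun j => n (φ j))
      (fun i => le_trans hφ.le_apply (hn (φ i))) hlim
  have hyx : y = x := hsub y hyω
  have hdy : Tendsto (fun j => dist (a (n (φ j))) x) atTop (𝓝 (dist y x)) :=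
    ((continuous_id.dist continuous_const).tendsto y).comp hlim
  have : ε ≤ dist y x := ge_of_tendsto hdy (Eventually.of_forall fun j => hd (φ j))
  rw [hyx, dist_self] at this
  linarith

end ConvAux

set_option maxHeartbeats 4000000 in
/-- Theorem 2 (convergence theorem): for a σ-periodic cocycle satisfying (H1), (H2) with
`j = 1`, (H3) and (COM3), every bounded semi-trajectory converges to a σ-periodic
trajectory. -/
theorem convergence_theorem
    {H : Type*} [NormedAddCommGroup H] [InnerProductSpace ℝ H]
    [CompleteSpace H] [TopologicalSpace.SeparableSpace H]
    (σ : ℝ) (hσ : 0 < σ)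
    (ψ : ℝ → AddCircle σ → H → H)
    (hcoc : IsCocycle (circleFlow σ) ψ)
    (P : H →L[ℝ] H) (Hplus Hminus : Submodule ℝ H)
    (h1 : HypH1 P Hplus Hminus)
    (h2 : HypH2 Hminus 1)
    (δ ν : ℝ) (h3 : HypH3 ψ P δ ν)
    (hcom3 : HypCOM3 ψ) :
    ∀ (q : AddCircle σ) (u₀ : H),
      IsBounded ((fun t => ψ t q u₀) '' Set.Ici (0:ℝ)) →
      ∃ v : ℝ → H, IsCompleteTraj (circleFlow σ) ψ q v ∧ (∀ t : ℝ, v (t + σ) = v t) ∧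
        Tendsto (fun t : ℝ => ψ t q u₀ - v t) atTop (𝓝 0) := by
  obtain ⟨hψ0, hψadd, hψcont⟩ := hcoc
  obtain ⟨hδ, hν, hsq⟩ := h3
  obtain ⟨hfin, hrank⟩ := h2
  intro q u₀ hbdd
  -- ## continuity facts
  have hcontP : ∀ (t : ℝ), 0 ≤ t → ∀ (q' : AddCircle σ), Continuous fun p : H => ψ t q' p := by
    intro t ht q'
    have h := hψcont.comp_continuous
      (f := fun p : H => ((t, q', p) : ℝ × AddCircle σ × H))
      (continuous_const.prodMk (continuous_const.prodMk continuous_id)) (fun p => ht)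
    exact h
  have hcontT : ∀ (q' : AddCircle σ) (p : H), ContinuousOn (fun t => ψ t q' p) (Ici 0) := by
    intro q' p
    have h := hψcont.comp (f := fun t : ℝ => ((t, q', p) : ℝ × AddCircle σ × H))
      ((continuous_id.prodMk continuous_const).continuousOn) (fun t ht => ht)
    exact h
  -- ## AddCircle arithmetic
  have hper : ∀ k : ℤ, (((k * σ : ℝ)) : AddCircle σ) = 0 := by
    intro k
    have h : ((k * σ : ℝ) : AddCircle σ) = ((k • σ : ℝ) : AddCircle σ) := by norm_num
    rw [h]
    exact (AddCircle.coe_eq_zero_iff σ).2 ⟨k, rfl⟩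
  have hcoe_shift : ∀ (s : ℝ) (k : ℤ), ((s : ℝ) : AddCircle σ) = ((s - k * σ : ℝ) : AddCircle σ) := by
    intro s k
    have h : ((s : ℝ) : AddCircle σ) = ((s - k * σ : ℝ) : AddCircle σ) + ((k * σ : ℝ) : AddCircle σ) := by
      rw [← AddCircle.coe_add]; norm_num
    rw [h, hper, add_zero]
  have hflow_nat : ∀ (n : ℕ) (q' : AddCircle σ), circleFlow σ ((n : ℝ) * σ) q' = q' := by
    intro n q'
    show q' + (((n : ℝ) * σ : ℝ) : AddCircle σ) = q'
    have h := hper (n : ℤ)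
    push_cast at h
    rw [h, add_zero]
  -- ## the compact set K
  have hK := hcom3 q u₀ hbdd
  set K : Set H := closure ((fun t => ψ t q u₀) '' Set.Ici (0:ℝ)) with hKdef
  -- ## discrete dynamics
  set T : H → H := fun p => ψ σ q p with hTdef
  set a : ℕ → H := fun n => ψ ((n : ℝ) * σ) q u₀ with hadef
  have hTcont : Continuous T := hcontP σ hσ.le q
  have haK : ∀ n, a n ∈ K := by
    intro n
    exact subset_closure (mem_image_of_mem _ (mem_Ici.2 (by positivity)))
  have hstep : ∀ (x : ℝ), 0 ≤ x → ∀ (n : ℕ) (p : H),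
      ψ (x + (n:ℝ) * σ) q p = ψ x q (ψ ((n:ℝ) * σ) q p) := by
    intro x hx n p
    rw [hψadd x ((n:ℝ)*σ) hx (by positivity), hflow_nat n q]
  have hTn : ∀ (n : ℕ) (p : H), ψ ((n:ℝ) * σ) q p = T^[n] p := by
    intro n p
    induction n with
    | zero => simp [hψ0]
    | succ n ih =>
        have h1 : ((n+1 : ℕ) : ℝ) * σ = σ + (n:ℝ)*σ := by push_cast; ring
        rw [h1, hψadd σ ((n:ℝ)*σ) hσ.le (by positivity), hflow_nat n q, ih,
          Function.iterate_succ_apply']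
  have hrec : ∀ n, a (n + 1) = T (a n) := by
    intro n
    show ψ (((n+1:ℕ)) * σ) q u₀ = T (ψ ((n:ℝ) * σ) q u₀)
    rw [hTn, hTn, Function.iterate_succ_apply']
  set ω : Set H := ConvAux.omegaSet a with hωdef
  have hωK : ω ⊆ K := ConvAux.omegaSet_subset_closed hK.isClosed haK
  have hωne : ω.Nonempty := ConvAux.omegaSet_nonempty hK haK
  have hTω : ∀ x ∈ ω, T x ∈ ω := by
    intro x hx ε hε N
    obtain ⟨γ₀, hγ₀pos, hγ₀⟩ := Metric.uniformContinuousOn_iff.1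
      (hK.uniformContinuousOn_of_continuous hTcont.continuousOn) ε hε
    obtain ⟨n, hn, hnear⟩ := hx γ₀ hγ₀pos N
    refine ⟨n + 1, by omega, ?_⟩
    rw [hrec n]
    have h := hγ₀ (a n) (haK n) x (hωK hx) (by rw [dist_eq_norm]; exact hnear)
    rwa [dist_eq_norm] at h
  -- ## the vector e spanning Hminus
  have hminus_rank : Module.finrank ℝ Hminus = 1 := hrank
  obtain ⟨e, he_mem, he_ne, he_norm, he_span⟩ :
      ∃ e : H, e ∈ Hminus ∧ e ≠ 0 ∧ ‖e‖ = 1 ∧ ∀ m ∈ Hminus, ∃ t : ℝ, m = t • e := by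
    haveI : Nontrivial Hminus := by
      exact Module.nontrivial_of_finrank_pos (R := ℝ) (by rw [hminus_rank]; norm_num)
    obtain ⟨v₀, hv₀ne⟩ := exists_ne (0 : Hminus)
    have hspan : Submodule.span ℝ {v₀} = (⊤ : Submodule ℝ Hminus) :=
      (finrank_eq_one_iff_of_nonzero v₀ hv₀ne).1 hminus_rank
    have hv₀norm : ‖(v₀ : H)‖ ≠ 0 := by
      simp only [norm_ne_zero_iff]
      exact fun h => hv₀ne (Subtype.ext (by simpa using h))
    refine ⟨‖(v₀ : H)‖⁻¹ • (v₀ : H), Hminus.smul_mem _ v₀.2, ?_, ?_, ?_⟩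
    · intro h
      rcases smul_eq_zero.1 h with h | h
      · exact hv₀norm (by simpa using h)
      · exact hv₀ne (Subtype.ext (by simpa using h))
    · rw [norm_smul, norm_inv, norm_norm, inv_mul_cancel₀ hv₀norm]
    · intro m hm
      have hmem : (⟨m, hm⟩ : Hminus) ∈ Submodule.span ℝ {v₀} := by rw [hspan]; trivial
      obtain ⟨t, ht⟩ := Submodule.mem_span_singleton.1 hmem
      refine ⟨t * ‖(v₀ : H)‖, ?_⟩
      have : m = t • (v₀ : H) := by
        have := congrArg (fun w : Hminus => (w : H)) ht
        simpa using this.symm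
      rw [this, smul_smul, mul_assoc, mul_inv_cancel₀ hv₀norm, mul_one]
  -- V is nonneg where ⟪e, ·⟫ vanishes
  have hVneg_ne : ∀ w : H, ⟪P w, w⟫ < 0 → ⟪e, w⟫ ≠ 0 := by
    intro w hVw hinner0
    have hwperp : w ∈ Hminusᗮ := by
      rw [Submodule.mem_orthogonal]
      intro m hm
      obtain ⟨t, hmt⟩ := he_span m hm
      rw [hmt, real_inner_smul_left, hinner0, mul_zero]
    have hwplus : w ∈ Hplus := by
      rw [h1.orth] at hwperp
      haveI : CompleteSpace Hplus := h1.closed_plus.completeSpace_coe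
      rwa [Submodule.orthogonal_orthogonal] at hwperp
    rcases eq_or_ne w 0 with rfl | hne
    · simp at hVw
    · exact absurd hVw (not_lt.2 (le_of_lt (h1.pos w hwplus hne)))
  have hVcont : Continuous (fun w : H => (⟪P w, w⟫ : ℝ)) := P.continuous.inner continuous_id
  have hVbd : ∀ w : H, ⟪P w, w⟫ ≤ ‖P‖ * ‖w‖^2 := by
    intro w
    have h1' : (⟪P w, w⟫ : ℝ) ≤ |⟪P w, w⟫| := le_abs_self _
    have h2 : |(⟪P w, w⟫ : ℝ)| ≤ ‖P w‖ * ‖w‖ := abs_real_inner_le_norm _ _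
    have h3 : ‖P w‖ ≤ ‖P‖ * ‖w‖ := P.le_opNorm w
    nlinarith [norm_nonneg w, norm_nonneg (P w)]
  -- ## squeezing monotonicity
  have hfcont : ∀ (p z : H),
      ContinuousOn (fun s : ℝ => Real.exp (2*ν*s) * ‖ψ s q p - ψ s q z‖^2) (Ici 0) := by
    intro p z
    exact ((Real.continuous_exp.comp (continuous_const.mul continuous_id)).continuousOn).mul
      ((((hcontT q p).sub (hcontT q z)).norm).pow 2)
  have hII : ∀ (p z : H) (l r : ℝ), 0 ≤ l → 0 ≤ r →
      IntervalIntegrable (fun s => Real.exp (2*ν*s) * ‖ψ s q p - ψ s q z‖^2) volume l r := by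
    intro p z l r hl hr
    apply ContinuousOn.intervalIntegrable
    apply (hfcont p z).mono
    intro s hs
    rcases le_total l r with h | h
    · rw [uIcc_of_le h] at hs; exact le_trans hl hs.1
    · rw [uIcc_of_ge h] at hs; exact le_trans hr hs.1
  have hmono : ∀ (p z : H) (l r : ℝ), 0 ≤ l → l ≤ r →
      Real.exp (2*ν*r) * ⟪P (ψ r q p - ψ r q z), ψ r q p - ψ r q z⟫ ≤
      Real.exp (2*ν*l) * ⟪P (ψ l q p - ψ l q z), ψ l q p - ψ l q z⟫ := by
    intro p z l r hl hlr
    have h := hsq q p z l r hl hlr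
    have hint : 0 ≤ ∫ s in l..r, Real.exp (2*ν*s) * ‖ψ s q p - ψ s q z‖^2 :=
      intervalIntegral.integral_nonneg hlr (fun s hs => by positivity)
    nlinarith [mul_nonneg hδ.le hint]
  -- ## norm bound on K
  obtain ⟨R, hR⟩ : ∃ R : ℝ, ∀ p ∈ K, ‖p‖ ≤ R := by
    obtain ⟨R, hR⟩ := hK.isBounded.subset_closedBall 0
    exact ⟨R, fun p hp => by simpa [Metric.mem_closedBall, dist_zero_right] using hR hp⟩
  have hR0 : 0 ≤ R := le_trans (norm_nonneg _) (hR _ (haK 0))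
  -- ## backward chains in ω
  have hchain : ∀ x ∈ ω, ∃ z : ℕ → H, z 0 = x ∧ (∀ k, z k ∈ ω) ∧
      ∀ k m : ℕ, T^[m] (z (k + m)) = z k := by
    intro x hx
    have hsurj := ConvAux.omegaSet_surj hK haK hTcont hrec
    let f : {p // p ∈ ω} → {p // p ∈ ω} :=
      fun p => ⟨(hsurj p.1 p.2).choose, (hsurj p.1 p.2).choose_spec.1⟩
    have hf : ∀ p, T (f p).1 = p.1 := fun p => (hsurj p.1 p.2).choose_spec.2
    refine ⟨fun k => (f^[k] ⟨x, hx⟩).1, by simp, fun k => (f^[k] ⟨x, hx⟩).2, ?_⟩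
    have hone : ∀ k : ℕ, T ((f^[k+1] ⟨x,hx⟩).1) = (f^[k] ⟨x,hx⟩).1 := by
      intro k
      rw [Function.iterate_succ_apply']
      exact hf _
    intro k m
    induction m with
    | zero => simp
    | succ m ih =>
        have hk : k + (m+1) = (k+m) + 1 := by omega
        rw [hk, Function.iterate_succ_apply, hone (k+m)]
        exact ih
  -- ## Step B : the quadratic form is negative on differences of omega-limit points
  have stepB : ∀ x ∈ ω, ∀ y ∈ ω, x ≠ y → ⟪P (x - y), x - y⟫ < 0 := by
    intro x hx y hy hxy
    obtain ⟨zx, hzx0, hzxω, hzxiter⟩ := hchain x hx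
    obtain ⟨zy, hzy0, hzyω, hzyiter⟩ := hchain y hy
    have hx1 : T (zx 1) = x := by
      have h := hzxiter 0 1
      simpa [hzx0] using h
    have hy1 : T (zy 1) = y := by
      have h := hzyiter 0 1
      simpa [hzy0] using h
    have hne_t : ∀ τ ∈ Icc (0:ℝ) σ, ψ τ q (zx 1) ≠ ψ τ q (zy 1) := by
      intro τ hτ heq
      apply hxy
      rw [← hx1, ← hy1]
      show ψ σ q (zx 1) = ψ σ q (zy 1)
      have harg : σ - τ + τ = σ := by ring
      have e1 : ψ σ q (zx 1) = ψ (σ - τ) (circleFlow σ τ q) (ψ τ q (zx 1)) := by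
        rw [← hψadd (σ - τ) τ (by linarith [hτ.2]) hτ.1, harg]
      have e2 : ψ σ q (zy 1) = ψ (σ - τ) (circleFlow σ τ q) (ψ τ q (zy 1)) := by
        rw [← hψadd (σ - τ) τ (by linarith [hτ.2]) hτ.1, harg]
      rw [e1, e2, heq]
    set c₁ := ∫ τ in (0:ℝ)..σ, Real.exp (2*ν*τ) * ‖ψ τ q (zx 1) - ψ τ q (zy 1)‖^2 with hc₁
    have hc₁pos : 0 < c₁ := by
      apply intervalIntegral.intervalIntegral_pos_of_pos_on (hII _ _ 0 σ le_rfl hσ.le) _ hσ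
      intro s hs
      have hne := hne_t s ⟨hs.1.le, hs.2.le⟩
      have hs0 : ψ s q (zx 1) - ψ s q (zy 1) ≠ 0 := sub_ne_zero.2 hne
      exact mul_pos (Real.exp_pos _) (pow_pos (norm_pos_iff.2 hs0) 2)
    -- the key estimate for each j
    have hkey : ∀ j : ℕ, ⟪P (x - y), x - y⟫ ≤
        Real.exp (-(2*ν*(((j:ℝ)+1)*σ))) * (‖P‖ * (2*R)^2) - δ * (Real.exp (-(2*ν*σ)) * c₁) := by
      intro j
      have hjσ : (0:ℝ) ≤ (j:ℝ)*σ := by positivity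
      have hj1σ : (0:ℝ) ≤ ((j:ℝ)+1)*σ := by positivity
      have hsq' := hsq q (zx (j+1)) (zy (j+1)) 0 (((j:ℝ)+1)*σ) le_rfl hj1σ
      have hcast : ((j:ℝ)+1) * σ = ((j+1 : ℕ):ℝ) * σ := by push_cast; ring
      have hendx : ψ (((j:ℝ)+1)*σ) q (zx (j+1)) = x := by
        rw [hcast, hTn (j+1)]
        have h := hzxiter 0 (j+1)
        simpa [hzx0] using h
      have hendy : ψ (((j:ℝ)+1)*σ) q (zy (j+1)) = y := by
        rw [hcast, hTn (j+1)]
        have h := hzyiter 0 (j+1)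
        simpa [hzy0] using h
      rw [hendx, hendy, hψ0, hψ0] at hsq'
      simp only [mul_zero, Real.exp_zero, one_mul] at hsq'
      -- lower bound for the integral over the last period
      have hI2 : (∫ s in ((j:ℝ)*σ)..(((j:ℝ)+1)*σ),
          Real.exp (2*ν*s) * ‖ψ s q (zx (j+1)) - ψ s q (zy (j+1))‖^2) =
          Real.exp (2*ν*((j:ℝ)*σ)) * c₁ := by
        have hcv := intervalIntegral.integral_comp_add_right
          (fun s => Real.exp (2*ν*s) * ‖ψ s q (zx (j+1)) - ψ s q (zy (j+1))‖^2) ((j:ℝ)*σ)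
          (a := 0) (b := σ)
        rw [zero_add, show σ + (j:ℝ)*σ = ((j:ℝ)+1)*σ by ring] at hcv
        rw [← hcv, ← intervalIntegral.integral_const_mul]
        apply intervalIntegral.integral_congr
        intro τ hτ
        have hτ0 : 0 ≤ τ := by
          rw [uIcc_of_le hσ.le] at hτ; exact hτ.1
        have hshiftx : ψ (τ + (j:ℝ)*σ) q (zx (j+1)) = ψ τ q (zx 1) := by
          rw [hstep τ hτ0 j (zx (j+1)), hTn j]
          congr 1
          have h := hzxiter 1 j
          rwa [show 1 + j = j + 1 by omega] at h
        have hshifty : ψ (τ + (j:ℝ)*σ) q (zy (j+1)) = ψ τ q (zy 1) := by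
          rw [hstep τ hτ0 j (zy (j+1)), hTn j]
          congr 1
          have h := hzyiter 1 j
          rwa [show 1 + j = j + 1 by omega] at h
        show Real.exp (2*ν*(τ + (j:ℝ)*σ)) *
            ‖ψ (τ + (j:ℝ)*σ) q (zx (j+1)) - ψ (τ + (j:ℝ)*σ) q (zy (j+1))‖^2 = _
        rw [hshiftx, hshifty, show 2*ν*(τ + (j:ℝ)*σ) = 2*ν*((j:ℝ)*σ) + 2*ν*τ by ring,
          Real.exp_add]
        ring
      have hIsplit := intervalIntegral.integral_add_adjacent_intervals
        (hII (zx (j+1)) (zy (j+1)) 0 ((j:ℝ)*σ) le_rfl hjσ)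
        (hII (zx (j+1)) (zy (j+1)) ((j:ℝ)*σ) (((j:ℝ)+1)*σ) hjσ hj1σ)
      have hI1 : 0 ≤ ∫ s in (0:ℝ)..((j:ℝ)*σ),
          Real.exp (2*ν*s) * ‖ψ s q (zx (j+1)) - ψ s q (zy (j+1))‖^2 :=
        intervalIntegral.integral_nonneg hjσ (fun s hs => by positivity)
      have hIlow : Real.exp (2*ν*((j:ℝ)*σ)) * c₁ ≤ ∫ s in (0:ℝ)..(((j:ℝ)+1)*σ),
          Real.exp (2*ν*s) * ‖ψ s q (zx (j+1)) - ψ s q (zy (j+1))‖^2 := by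
        rw [← hIsplit, ← hI2]
        linarith
      -- bound on the middle term
      have hVz : ⟪P (zx (j+1) - zy (j+1)), zx (j+1) - zy (j+1)⟫ ≤ ‖P‖ * (2*R)^2 := by
        have h1' := hVbd (zx (j+1) - zy (j+1))
        have h2 : ‖zx (j+1) - zy (j+1)‖ ≤ 2*R := by
          calc ‖zx (j+1) - zy (j+1)‖ ≤ ‖zx (j+1)‖ + ‖zy (j+1)‖ := norm_sub_le _ _
            _ ≤ R + R := add_le_add (hR _ (hωK (hzxω _))) (hR _ (hωK (hzyω _)))
            _ = 2*R := by ring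
        have hPn : 0 ≤ ‖P‖ := norm_nonneg _
        have h3 : ‖zx (j+1) - zy (j+1)‖^2 ≤ (2*R)^2 := by
          nlinarith [norm_nonneg (zx (j+1) - zy (j+1))]
        have h4 : ‖P‖ * ‖zx (j+1) - zy (j+1)‖^2 ≤ ‖P‖ * (2*R)^2 :=
          mul_le_mul_of_nonneg_left h3 hPn
        linarith
      -- combine
      have hmain : Real.exp (2*ν*(((j:ℝ)+1)*σ)) * ⟪P (x - y), x - y⟫ ≤
          ‖P‖ * (2*R)^2 - δ * (Real.exp (2*ν*((j:ℝ)*σ)) * c₁) := by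
        have hδI := mul_le_mul_of_nonneg_left hIlow hδ.le
        linarith
      have hEpos : (0:ℝ) < Real.exp (2*ν*(((j:ℝ)+1)*σ)) := Real.exp_pos _
      have hfin := mul_le_mul_of_nonneg_left hmain
        (le_of_lt (Real.exp_pos (-(2*ν*(((j:ℝ)+1)*σ)))))
      have hE1 : Real.exp (-(2*ν*(((j:ℝ)+1)*σ))) * Real.exp (2*ν*(((j:ℝ)+1)*σ)) = 1 := by
        rw [← Real.exp_add]
        norm_num
      have hE2 : Real.exp (-(2*ν*(((j:ℝ)+1)*σ))) * Real.exp (2*ν*((j:ℝ)*σ)) =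
          Real.exp (-(2*ν*σ)) := by
        rw [← Real.exp_add]
        congr 1
        ring
      calc ⟪P (x - y), x - y⟫
          = Real.exp (-(2*ν*(((j:ℝ)+1)*σ))) * (Real.exp (2*ν*(((j:ℝ)+1)*σ)) * ⟪P (x - y), x - y⟫) := by
            rw [← mul_assoc, hE1, one_mul]
        _ ≤ Real.exp (-(2*ν*(((j:ℝ)+1)*σ))) * (‖P‖ * (2*R)^2 - δ * (Real.exp (2*ν*((j:ℝ)*σ)) * c₁)) := hfin
        _ = Real.exp (-(2*ν*(((j:ℝ)+1)*σ))) * (‖P‖ * (2*R)^2)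
            - δ * ((Real.exp (-(2*ν*(((j:ℝ)+1)*σ))) * Real.exp (2*ν*((j:ℝ)*σ))) * c₁) := by ring
        _ = Real.exp (-(2*ν*(((j:ℝ)+1)*σ))) * (‖P‖ * (2*R)^2) - δ * (Real.exp (-(2*ν*σ)) * c₁) := by
            rw [hE2]
    -- let j → ∞
    have hgeom : ∀ j : ℕ, Real.exp (-(2*ν*(((j:ℝ)+1)*σ))) = Real.exp (-(2*ν*σ)) ^ (j+1) := by
      intro j
      rw [← Real.exp_nat_mul]
      congr 1
      push_cast
      ring
    have hrlt : Real.exp (-(2*ν*σ)) < 1 := by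
      rw [Real.exp_lt_one_iff]
      nlinarith
    have hr0 : (0:ℝ) ≤ Real.exp (-(2*ν*σ)) := (Real.exp_pos _).le
    have hpow : Tendsto (fun j : ℕ => Real.exp (-(2*ν*σ)) ^ (j+1)) atTop (𝓝 0) := by
      have h1' := tendsto_pow_atTop_nhds_zero_of_lt_one hr0 hrlt
      exact h1'.comp (tendsto_add_atTop_nat 1)
    have hlim : Tendsto (fun j : ℕ => Real.exp (-(2*ν*(((j:ℝ)+1)*σ))) * (‖P‖ * (2*R)^2))
        atTop (𝓝 0) := by
      simp only [hgeom]
      simpa using hpow.mul_const (‖P‖ * (2*R)^2)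
    have htarget : (0:ℝ) < δ * (Real.exp (-(2*ν*σ)) * c₁) :=
      mul_pos hδ (mul_pos (Real.exp_pos _) hc₁pos)
    have hev := hlim.eventually_lt_const htarget
    obtain ⟨j, hj⟩ := hev.exists
    have := hkey j
    linarith
  -- ## forward invariance of the negative cone
  have hVforward : ∀ (p z : H), ⟪P (p - z), p - z⟫ < 0 → ∀ τ, 0 ≤ τ →
      ⟪P (ψ τ q p - ψ τ q z), ψ τ q p - ψ τ q z⟫ < 0 := by
    intro p z h0 τ hτ
    have h := hmono p z 0 τ le_rfl hτ
    rw [hψ0, hψ0] at h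
    simp only [mul_zero, Real.exp_zero, one_mul] at h
    have he1 : 0 < Real.exp (2*ν*τ) := Real.exp_pos _
    nlinarith
  -- ## order preservation along the cone
  have hord_sign : ∀ (e' : H), ‖e'‖ = 1 → (∀ w : H, ⟪P w, w⟫ < 0 → ⟪e', w⟫ ≠ 0) →
      ∀ p z : H, ⟪P (p - z), p - z⟫ < 0 → (0:ℝ) < ⟪e', p - z⟫ → 0 < ⟪e', T p - T z⟫ := by
    intro e' he1 hVe p z hV hpos
    have hgcont : ContinuousOn (fun τ : ℝ => (⟪e', ψ τ q p - ψ τ q z⟫ : ℝ)) (Icc 0 σ) := by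
      apply ContinuousOn.inner continuousOn_const
      exact (((hcontT q p).sub (hcontT q z)).mono (fun s hs => hs.1))
    have hgne : ∀ τ ∈ Icc (0:ℝ) σ, (⟪e', ψ τ q p - ψ τ q z⟫ : ℝ) ≠ 0 :=
      fun τ hτ => hVe _ (hVforward p z hV τ hτ.1)
    have hg0 : (0:ℝ) < ⟪e', ψ 0 q p - ψ 0 q z⟫ := by rw [hψ0, hψ0]; exact hpos
    by_contra hle
    push_neg at hle
    have hgσ : (⟪e', ψ σ q p - ψ σ q z⟫ : ℝ) < 0 :=
      lt_of_le_of_ne (by exact hle) (hgne σ ⟨hσ.le, le_rfl⟩)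
    have hivt := intermediate_value_Icc' hσ.le hgcont
    have h0mem : (0:ℝ) ∈ Icc (⟪e', ψ σ q p - ψ σ q z⟫ : ℝ) (⟪e', ψ 0 q p - ψ 0 q z⟫ : ℝ) :=
      ⟨hgσ.le, hg0.le⟩
    obtain ⟨τ, hτ, hτ0⟩ := hivt h0mem
    exact hgne τ hτ hτ0
  -- ## all omega-limit points are fixed points of T
  have hkey_e : ∀ (e' : H), ‖e'‖ = 1 → (∀ w : H, ⟪P w, w⟫ < 0 → ⟪e', w⟫ ≠ 0) →
      ∀ x ∈ ω, (⟪e', T x⟫ : ℝ) ≤ ⟪e', x⟫ := by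
    intro e' he1 hVe x hx
    refine ConvAux.trap_lemma hK haK hTcont hrec
      (f := fun p => (⟪e', p⟫ : ℝ)) (continuous_const.inner continuous_id) ?_ hx ?_ ?_
    · intro p z
      have h : (⟪e', p⟫ : ℝ) - ⟪e', z⟫ = ⟪e', p - z⟫ := (inner_sub_right _ _ _).symm
      rw [h]
      have h2 := abs_real_inner_le_norm e' (p - z)
      rwa [he1, one_mul] at h2
    · intro z hz hfz
      by_contra hne
      have hV := stepB z hz x hx hne
      exact hVe _ hV (by rw [inner_sub_right]; rw [sub_eq_zero]; exact hfz)
    · intro z hz hlt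
      have hne : z ≠ x := by intro h; rw [h] at hlt; exact lt_irrefl _ hlt
      have hV : ⟪P (z - x), z - x⟫ < 0 := stepB z hz x hx hne
      have h := hord_sign e' he1 hVe z x hV (by rw [inner_sub_right]; linarith)
      rw [inner_sub_right] at h
      linarith
  have hfix : ∀ x ∈ ω, T x = x := by
    intro x hx
    have hA := hkey_e e he_norm hVneg_ne x hx
    have hB := hkey_e (-e) (by simpa using he_norm)
      (fun w hw => by simpa using hVneg_ne w hw) x hx
    rw [inner_neg_left, inner_neg_left] at hB
    have heq : (⟪e, T x⟫ : ℝ) = ⟪e, x⟫ := le_antisymm hA (by linarith)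
    by_contra hne
    have hV := stepB (T x) (hTω x hx) x hx hne
    exact hVneg_ne _ hV (by rw [inner_sub_right]; rw [sub_eq_zero]; exact heq)
  -- ## the three-point ("middle") contradiction
  have hmid : ∀ b m tt : H, b ∈ ω → m ∈ ω → tt ∈ ω →
      (⟪e, b⟫ : ℝ) < ⟪e, m⟫ → (⟪e, m⟫ : ℝ) < ⟪e, tt⟫ → False := by
    intro b m tt hb hm htt hbm hmtt
    have hbne : b ≠ m := fun h => by rw [h] at hbm; exact lt_irrefl _ hbm
    have hmfix : T m = m := hfix m hm
    have hmiter : ∀ n : ℕ, ψ ((n:ℝ)*σ) q m = m := by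
      intro n
      rw [hTn n m]
      exact Function.iterate_fixed hmfix n
    have hVbm : ⟪P (b - m), b - m⟫ < 0 := stepB b hb m hm hbne
    obtain ⟨r₀, hr₀pos, hr₀⟩ : ∃ r > 0, ∀ w : H, ‖w - (b - m)‖ < r → ⟪P w, w⟫ < 0 := by
      have hc : ContinuousAt (fun w : H => (⟪P w, w⟫ : ℝ)) (b - m) := hVcont.continuousAt
      obtain ⟨r, hr, hball⟩ := Metric.continuousAt_iff.1 hc (-⟪P (b-m), b-m⟫) (by linarith)
      refine ⟨r, hr, fun w hw => ?_⟩
      have h2 := hball (show dist w (b - m) < r by rw [dist_eq_norm]; exact hw)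
      rw [Real.dist_eq] at h2
      have h3 := (abs_lt.1 h2).2
      linarith
    obtain ⟨n₀, -, hn₀⟩ := hb r₀ hr₀pos 0
    have hΛ0 : ⟪P (a n₀ - m), a n₀ - m⟫ < 0 := by
      apply hr₀
      rw [show a n₀ - m - (b - m) = a n₀ - b by abel]
      exact hn₀
    have ht₀ : (0:ℝ) ≤ (n₀:ℝ)*σ := by positivity
    have hΛ : ∀ s : ℝ, (n₀:ℝ)*σ ≤ s →
        ⟪P (ψ s q u₀ - ψ s q m), ψ s q u₀ - ψ s q m⟫ < 0 := by
      intro s hs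
      have h := hmono u₀ m ((n₀:ℝ)*σ) s ht₀ hs
      have he1 : ψ ((n₀:ℝ)*σ) q u₀ = a n₀ := rfl
      rw [he1, hmiter n₀] at h
      have h2 := Real.exp_pos (2*ν*s)
      have h3 := Real.exp_pos (2*ν*((n₀:ℝ)*σ))
      nlinarith
    have hgne : ∀ s : ℝ, (n₀:ℝ)*σ ≤ s → (⟪e, ψ s q u₀ - ψ s q m⟫ : ℝ) ≠ 0 :=
      fun s hs => hVneg_ne _ (hΛ s hs)
    obtain ⟨n₁, hn₁ge, hn₁⟩ := hb ((⟪e, m⟫ - ⟪e, b⟫)/2) (by linarith) n₀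
    obtain ⟨n₂, hn₂ge, hn₂⟩ := htt ((⟪e, tt⟫ - ⟪e, m⟫)/2) (by linarith) n₁
    have hs₁ : (n₀:ℝ)*σ ≤ (n₁:ℝ)*σ := by
      have h : (n₀:ℝ) ≤ n₁ := by exact_mod_cast hn₁ge
      nlinarith
    have hs₂ : (n₁:ℝ)*σ ≤ (n₂:ℝ)*σ := by
      have h : (n₁:ℝ) ≤ n₂ := by exact_mod_cast hn₂ge
      nlinarith
    have hinner_abs : ∀ w z' : H, |(⟪e, w - z'⟫ : ℝ)| ≤ ‖w - z'‖ := by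
      intro w z'
      have h := abs_real_inner_le_norm e (w - z')
      rwa [he_norm, one_mul] at h
    have hg1 : (⟪e, ψ ((n₁:ℝ)*σ) q u₀ - ψ ((n₁:ℝ)*σ) q m⟫ : ℝ) < 0 := by
      have he1 : ψ ((n₁:ℝ)*σ) q u₀ = a n₁ := rfl
      rw [he1, hmiter n₁, inner_sub_right]
      have h2 := (abs_le.1 (hinner_abs (a n₁) b)).2
      have h3 : (⟪e, a n₁ - b⟫ : ℝ) < (⟪e, m⟫ - ⟪e, b⟫)/2 := lt_of_le_of_lt h2 hn₁
      rw [inner_sub_right] at h3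
      linarith
    have hg2 : (0:ℝ) < ⟪e, ψ ((n₂:ℝ)*σ) q u₀ - ψ ((n₂:ℝ)*σ) q m⟫ := by
      have he1 : ψ ((n₂:ℝ)*σ) q u₀ = a n₂ := rfl
      rw [he1, hmiter n₂, inner_sub_right]
      have h2 := (abs_le.1 (hinner_abs (a n₂) tt)).1
      have h3 : -((⟪e, tt⟫ - ⟪e, m⟫)/2) < (⟪e, a n₂ - tt⟫ : ℝ) := by
        have := hinner_abs (a n₂) tt
        nlinarith [abs_lt.1 (lt_of_le_of_lt (le_refl |(⟪e, a n₂ - tt⟫ : ℝ)|) (lt_of_le_of_lt this hn₂))]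
      rw [inner_sub_right] at h3
      linarith
    have hgcont : ContinuousOn (fun s : ℝ => (⟪e, ψ s q u₀ - ψ s q m⟫ : ℝ))
        (Icc ((n₁:ℝ)*σ) ((n₂:ℝ)*σ)) := by
      apply ContinuousOn.inner continuousOn_const
      apply ((hcontT q u₀).sub (hcontT q m)).mono
      intro s hs
      exact le_trans (le_trans ht₀ hs₁) hs.1
    have hivt := intermediate_value_Icc hs₂ hgcont
    obtain ⟨s, hsmem, hs0⟩ := hivt ⟨hg1.le, hg2.le⟩
    exact hgne s (le_trans hs₁ hsmem.1) hs0
  -- ## the omega-limit set is a single fixed point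
  obtain ⟨xstar, hxstar⟩ := hωne
  have hsingle : ∀ w ∈ ω, w = xstar := by
    by_contra hcon
    push_neg at hcon
    obtain ⟨y, hyω, hyne⟩ := hcon
    have hfne : ∀ p1 ∈ ω, ∀ p2 ∈ ω, p1 ≠ p2 → (⟪e, p1⟫ : ℝ) ≠ ⟪e, p2⟫ := by
      intro p1 hp1 p2 hp2 hne heq
      exact hVneg_ne _ (stepB p1 hp1 p2 hp2 hne)
        (by rw [inner_sub_right]; rw [sub_eq_zero]; exact heq)
    by_cases hthree : ∃ z ∈ ω, z ≠ xstar ∧ z ≠ y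
    · obtain ⟨z, hzω, hz1, hz2⟩ := hthree
      have h1 := hfne xstar hxstar y hyω (Ne.symm hyne)
      have h2 := hfne z hzω xstar hxstar hz1
      have h3 := hfne z hzω y hyω hz2
      rcases h1.lt_or_gt with hAB | hBA
      · rcases h2.lt_or_gt with hCA | hAC
        · exact hmid z xstar y hzω hxstar hyω hCA hAB
        · rcases h3.lt_or_gt with hCB | hBC
          · exact hmid xstar z y hxstar hzω hyω hAC hCB
          · exact hmid xstar y z hxstar hyω hzω hAB hBC
      · rcases h3.lt_or_gt with hCB | hBC
        · exact hmid z y xstar hzω hyω hxstar hCB hBA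
        · rcases h2.lt_or_gt with hCA | hAC
          · exact hmid y z xstar hyω hzω hxstar hBC hCA
          · exact hmid y xstar z hyω hxstar hzω hBA hAC
    · push_neg at hthree
      refine ConvAux.not_two_point hK haK hTcont hrec hxstar hyω (Ne.symm hyne) ?_
        (hfix xstar hxstar)
      intro w hw
      by_cases hwx : w = xstar
      · exact Or.inl hwx
      · exact Or.inr (hthree w hw hwx)
  have hTfix : T xstar = xstar := hfix xstar hxstar
  have hconv : Tendsto a atTop (𝓝 xstar) :=
    ConvAux.tendsto_of_omegaSet_subsingleton hK haK hsingle
  have hxK : xstar ∈ K := hωK hxstar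
  -- ## construction of the periodic trajectory v
  have hxiter : ∀ n : ℕ, ψ ((n:ℝ)*σ) q xstar = xstar := by
    intro n
    rw [hTn n xstar]
    exact Function.iterate_fixed hTfix n
  have hfrac0 : ∀ t : ℝ, 0 ≤ t - σ * ⌊t/σ⌋ := by
    intro t
    have h1 := Int.floor_le (t/σ)
    have h2 : σ * (⌊t/σ⌋ : ℝ) ≤ σ * (t/σ) := by nlinarith
    have h3 : σ * (t/σ) = t := by field_simp
    nlinarith
  have hfrac1 : ∀ t : ℝ, t - σ * ⌊t/σ⌋ < σ := by
    intro t
    have h1 := Int.lt_floor_add_one (t/σ)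
    have h2 : σ * (t/σ) < σ * ((⌊t/σ⌋ : ℝ) + 1) := by nlinarith
    have h3 : σ * (t/σ) = t := by field_simp
    nlinarith
  have hclaimA : ∀ (k : ℤ) (t : ℝ), (k:ℝ)*σ ≤ t →
      ψ (t - σ * ⌊t/σ⌋) q xstar = ψ (t - (k:ℝ)*σ) q xstar := by
    intro k t hkt
    have hkm : k ≤ ⌊t/σ⌋ := by
      apply Int.le_floor.2
      rw [le_div_iff₀ hσ]
      linarith
    set m := ⌊t/σ⌋ with hm
    set j : ℕ := (m - k).toNat with hj
    have hj1 : ((j:ℕ):ℤ) = m - k := by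
      rw [hj]
      exact Int.toNat_of_nonneg (by omega)
    have hjeq : ((j:ℕ):ℝ) = (m:ℝ) - (k:ℝ) := by
      exact_mod_cast congrArg (fun z : ℤ => (z:ℝ)) hj1
    have h1 : t - (k:ℝ)*σ = (t - σ*(m:ℝ)) + (j:ℝ)*σ := by rw [hjeq]; ring
    rw [h1, hstep (t - σ*(m:ℝ)) (hfrac0 t) j xstar, hxiter j]
  have hvper : ∀ t : ℝ, ψ (t + σ - σ * ⌊(t+σ)/σ⌋) q xstar = ψ (t - σ * ⌊t/σ⌋) q xstar := by
    intro t
    have h1 : (t+σ)/σ = t/σ + 1 := by field_simp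
    rw [h1, Int.floor_add_one]
    have h2 : t + σ - σ * ((⌊t/σ⌋ + 1 : ℤ) : ℝ) = t - σ * ((⌊t/σ⌋ : ℤ) : ℝ) := by
      push_cast
      ring
    rw [h2]
  have hvcont : Continuous (fun t : ℝ => ψ (t - σ * ⌊t/σ⌋) q xstar) := by
    rw [continuous_iff_continuousAt]
    intro t₀
    set k : ℤ := ⌊t₀/σ⌋ - 1 with hk
    have hkt : (k:ℝ)*σ < t₀ := by
      have h1 := hfrac0 t₀
      have h2 : ((k:ℤ):ℝ) = (⌊t₀/σ⌋ : ℝ) - 1 := by rw [hk]; push_cast; ring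
      rw [h2]
      nlinarith
    have hopen : IsOpen {t : ℝ | (k:ℝ)*σ < t} := isOpen_lt continuous_const continuous_id
    have hcont2 : ContinuousAt (fun t => ψ (t - (k:ℝ)*σ) q xstar) t₀ := by
      have hginto : Continuous fun t : ℝ =>
          ((t - (k:ℝ)*σ, q, xstar) : ℝ × AddCircle σ × H) :=
        (continuous_id.sub continuous_const).prodMk
          (continuous_const.prodMk continuous_const)
      have hFat : ContinuousAt (fun pr : ℝ × AddCircle σ × H => ψ pr.1 pr.2.1 pr.2.2)
          (t₀ - (k:ℝ)*σ, q, xstar) := by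
        apply hψcont.continuousAt
        rw [mem_nhds_iff]
        refine ⟨{p : ℝ × AddCircle σ × H | 0 < p.1}, fun p (hp : 0 < p.1) => le_of_lt hp,
          isOpen_lt continuous_const continuous_fst, ?_⟩
        show (0:ℝ) < t₀ - (k:ℝ)*σ
        linarith
      exact ContinuousAt.comp (g := fun pr : ℝ × AddCircle σ × H => ψ pr.1 pr.2.1 pr.2.2)
        (f := fun t : ℝ => ((t - (k:ℝ)*σ, q, xstar) : ℝ × AddCircle σ × H))
        hFat hginto.continuousAt
    apply hcont2.congr
    filter_upwards [hopen.mem_nhds hkt] with t ht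
    exact (hclaimA k t (le_of_lt ht)).symm
  have htraj : ∀ t : ℝ, 0 ≤ t → ∀ s : ℝ,
      ψ ((t + s) - σ * ⌊(t+s)/σ⌋) q xstar =
        ψ t (circleFlow σ s q) (ψ (s - σ * ⌊s/σ⌋) q xstar) := by
    intro t ht s
    set k : ℤ := ⌊s/σ⌋ with hk
    have hks : (k:ℝ)*σ ≤ s := by
      have := hfrac0 s
      rw [hk]
      nlinarith [hfrac0 s]
    rw [hclaimA k s hks, hclaimA k (t+s) (by linarith)]
    have hq : circleFlow σ s q = circleFlow σ (s - (k:ℝ)*σ) q := by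
      show q + ((s : ℝ) : AddCircle σ) = q + ((s - (k:ℝ)*σ : ℝ) : AddCircle σ)
      rw [hcoe_shift s k]
    rw [hq, ← hψadd t (s - (k:ℝ)*σ) ht (by linarith)]
    congr 1
    ring
  refine ⟨fun t => ψ (t - σ * ⌊t/σ⌋) q xstar, ⟨hvcont, fun t s ht => htraj t ht s⟩,
    fun t => hvper t, ?_⟩
  -- ## the convergence
  rw [Metric.tendsto_atTop]
  intro ε hε
  have hΦcont : ContinuousOn (fun pr : ℝ × H => ψ pr.1 q pr.2) (Icc 0 σ ×ˢ K) := by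
    have hmaps : ∀ pr : ℝ × H, pr ∈ (Icc (0:ℝ) σ ×ˢ K) →
        ((pr.1, q, pr.2) : ℝ × AddCircle σ × H) ∈ {p : ℝ × AddCircle σ × H | 0 ≤ p.1} := by
      intro pr hpr
      exact hpr.1.1
    have h := hψcont.comp
      (f := fun pr : ℝ × H => ((pr.1, q, pr.2) : ℝ × AddCircle σ × H))
      ((continuous_fst.prodMk (continuous_const.prodMk continuous_snd)).continuousOn)
      hmaps
    exact h
  obtain ⟨γ, hγpos, hγ⟩ := Metric.uniformContinuousOn_iff.1
    ((isCompact_Icc.prod hK).uniformContinuousOn_of_continuous hΦcont) ε hε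
  obtain ⟨N, hN⟩ := Metric.tendsto_atTop.1 hconv γ hγpos
  refine ⟨((N:ℝ)+1)*σ, fun t ht => ?_⟩
  have ht0 : (0:ℝ) ≤ t := le_trans (by positivity) ht
  have hfl0 : 0 ≤ ⌊t/σ⌋ := Int.floor_nonneg.2 (by positivity)
  set n : ℕ := (⌊t/σ⌋).toNat with hn
  have hnc : ((n:ℕ):ℝ) = ((⌊t/σ⌋ : ℤ):ℝ) := by
    rw [hn]
    exact_mod_cast congrArg (fun z : ℤ => (z:ℝ)) (Int.toNat_of_nonneg hfl0)
  have hNn : N ≤ n := by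
    have h1 : ((N:ℤ)+1) ≤ ⌊t/σ⌋ := by
      apply Int.le_floor.2
      rw [le_div_iff₀ hσ]
      push_cast
      linarith
    omega
  set τ := t - σ * ⌊t/σ⌋ with hτdef
  have hτmem : τ ∈ Icc (0:ℝ) σ := ⟨hfrac0 t, (hfrac1 t).le⟩
  have hut : ψ t q u₀ = ψ τ q (a n) := by
    have h1 : t = τ + (n:ℝ)*σ := by
      rw [hτdef, hnc]
      ring
    rw [h1, hstep τ (hfrac0 t) n u₀]
  show dist (ψ t q u₀ - ψ τ q xstar) 0 < ε
  rw [dist_zero_right, hut, ← dist_eq_norm]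
  have hd : dist ((τ, a n) : ℝ × H) ((τ, xstar) : ℝ × H) < γ := by
    rw [Prod.dist_eq]
    apply max_lt (by simpa using hγpos)
    exact hN n hNn
  exact hγ (τ, a n) ⟨hτmem, haK n⟩ (τ, xstar) ⟨hτmem, hxK⟩ hd
end
end

section
/- Assume (H1) and (H3). If u* and v* are both amenable complete trajectories at the same point q ∈ Q, then V(u*(t) − v*(t)) ≤ 0 for every t ∈ ℝ, where V(u) := (Pu,u). -/
open MeasureTheory Set Bornology Filter Topology RealInnerProductSpace

noncomputable section

variable {Q H : Type*}

/-! By (H3) the weighted quadratic form `s ↦ exp (2νs) V (u s - v s)` is nonincreasing along the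
pair of trajectories. It is bounded by `‖P‖ exp (2νs) ‖u s - v s‖²`, which is integrable on
`(-∞, 0]` by amenability. A positive value at time `t` would keep this integrand above a positive
constant on all of `(-∞, t]`, which is impossible for an integrable function. -/

theorem nonpos_of_integrableOn_Iic_of_eventually_le {f : ℝ → ℝ} {a c : ℝ}
    (hf : IntegrableOn f (Iic a)) (hle : ∀ᶠ s in atBot, c ≤ f s) : c ≤ 0 := by
  by_contra! hc
  obtain ⟨b, hb⟩ := eventually_atBot.1 hle
  have hconst : IntegrableOn (fun _ : ℝ => c) (Iic (min a b)) := by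
    refine (hf.mono_set (Iic_subset_Iic.2 (min_le_left a b))).mono' aestronglyMeasurable_const ?_
    refine (ae_restrict_iff' measurableSet_Iic).2 (ae_of_all _ fun s hs => ?_)
    simp only [Real.norm_eq_abs, abs_of_pos hc]
    exact hb s (hs.trans (min_le_right a b))
  rw [integrableOn_const_iff, Real.volume_Iic] at hconst
  simp [hc.ne'] at hconst

theorem real_inner_apply_self_le [NormedAddCommGroup H] [InnerProductSpace ℝ H]
    (P : H →L[ℝ] H) (x : H) : ⟪P x, x⟫ ≤ ‖P‖ * ‖x‖ ^ 2 :=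
  calc ⟪P x, x⟫ ≤ ‖P x‖ * ‖x‖ := real_inner_le_norm _ _
    _ ≤ ‖P‖ * ‖x‖ * ‖x‖ := by gcongr; exact P.le_opNorm x
    _ = ‖P‖ * ‖x‖ ^ 2 := by ring

theorem IsCompleteTraj.cocycle_apply [NormedAddCommGroup H] {ϑ : ℝ → Q → Q}
    {ψ : ℝ → Q → H → H} {q : Q} {u : ℝ → H} (hu : IsCompleteTraj ϑ ψ q u) {s t : ℝ}
    (hst : s ≤ t) : ψ (t - s) (ϑ s q) (u s) = u t := by
  simpa using (hu.2 (t - s) s (sub_nonneg.2 hst)).symm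

theorem IsAmenable.sub [NormedAddCommGroup H] {ν : ℝ} {u v : ℝ → H} (hua : IsAmenable ν u)
    (hva : IsAmenable ν v) (hu : Continuous u) (hv : Continuous v) : IsAmenable ν (u - v) := by
  refine ((hua.add hva).const_mul 2).mono' (by fun_prop) (ae_of_all _ fun s => ?_)
  have hsq : ‖u s - v s‖ ^ 2 ≤ 2 * (‖u s‖ ^ 2 + ‖v s‖ ^ 2) :=
    (pow_le_pow_left₀ (norm_nonneg _) (norm_sub_le _ _) 2).trans add_sq_le
  rw [Real.norm_eq_abs, abs_of_nonneg (by positivity), Pi.sub_apply, Pi.add_apply]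
  nlinarith [Real.exp_pos (2 * ν * s)]

section

variable [NormedAddCommGroup H] [InnerProductSpace ℝ H] {ψ : ℝ → Q → H → H} {P : H →L[ℝ] H}
  {δ ν : ℝ}

theorem HypH3.exp_mul_V_le (h3 : HypH3 ψ P δ ν) (q : Q) (x y : H) {l r : ℝ} (hl : 0 ≤ l)
    (hlr : l ≤ r) :
    Real.exp (2 * ν * r) * ⟪P (ψ r q x - ψ r q y), ψ r q x - ψ r q y⟫ ≤
      Real.exp (2 * ν * l) * ⟪P (ψ l q x - ψ l q y), ψ l q x - ψ l q y⟫ := by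
  have hI : 0 ≤ ∫ s in l..r, Real.exp (2 * ν * s) * ‖ψ s q x - ψ s q y‖ ^ 2 :=
    intervalIntegral.integral_nonneg hlr fun s _ => by positivity
  nlinarith [h3.1, h3.2.2 q x y l r hl hlr]

theorem HypH3.exp_mul_V_sub_traj_le (h3 : HypH3 ψ P δ ν) {ϑ : ℝ → Q → Q} {q : Q} {u v : ℝ → H}
    (hu : IsCompleteTraj ϑ ψ q u) (hv : IsCompleteTraj ϑ ψ q v) {s t : ℝ} (hst : s ≤ t) :
    Real.exp (2 * ν * t) * ⟪P (u t - v t), u t - v t⟫ ≤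
      Real.exp (2 * ν * s) * ⟪P (u s - v s), u s - v s⟫ := by
  have hu₀ : ψ 0 (ϑ s q) (u s) = u s := by simpa using hu.cocycle_apply le_rfl
  have hv₀ : ψ 0 (ϑ s q) (v s) = v s := by simpa using hv.cocycle_apply le_rfl
  have key := h3.exp_mul_V_le (ϑ s q) (u s) (v s) le_rfl (sub_nonneg.2 hst)
  rw [hu₀, hv₀, hu.cocycle_apply hst, hv.cocycle_apply hst, mul_zero, Real.exp_zero,
    one_mul] at key
  calc Real.exp (2 * ν * t) * ⟪P (u t - v t), u t - v t⟫
      = Real.exp (2 * ν * s) * (Real.exp (2 * ν * (t - s)) * ⟪P (u t - v t), u t - v t⟫) := by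
        rw [← mul_assoc, ← Real.exp_add]; ring_nf
    _ ≤ Real.exp (2 * ν * s) * ⟪P (u s - v s), u s - v s⟫ := by gcongr

end

theorem amenable_trajectories_nonpositive_V_general
    {Q H : Type*} [NormedAddCommGroup H] [InnerProductSpace ℝ H]
    (ϑ : ℝ → Q → Q) (ψ : ℝ → Q → H → H)
    (P : H →L[ℝ] H)
    (δ ν : ℝ) (h3 : HypH3 ψ P δ ν)
    (q : Q) (u v : ℝ → H)
    (hu : IsCompleteTraj ϑ ψ q u) (hua : IsAmenable ν u)
    (hv : IsCompleteTraj ϑ ψ q v) (hva : IsAmenable ν v) :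
    ∀ t : ℝ, ⟪P (u t - v t), u t - v t⟫ ≤ 0 := by
  intro t
  have hint : IntegrableOn (fun s => ‖P‖ * (Real.exp (2 * ν * s) * ‖u s - v s‖ ^ 2)) (Iic 0) :=
    (hua.sub hva hu.1 hv.1).const_mul _
  have hbound : ∀ᶠ s in atBot, Real.exp (2 * ν * t) * ⟪P (u t - v t), u t - v t⟫ ≤
      ‖P‖ * (Real.exp (2 * ν * s) * ‖u s - v s‖ ^ 2) := by
    filter_upwards [eventually_le_atBot t] with s hst
    calc _ ≤ Real.exp (2 * ν * s) * ⟪P (u s - v s), u s - v s⟫ :=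
          h3.exp_mul_V_sub_traj_le hu hv hst
      _ ≤ Real.exp (2 * ν * s) * (‖P‖ * ‖u s - v s‖ ^ 2) := by
          gcongr; exact real_inner_apply_self_le P _
      _ = _ := by ring
  exact nonpos_of_mul_nonpos_right (nonpos_of_integrableOn_Iic_of_eventually_le hint hbound)
    (Real.exp_pos _)

/-- Lemma 1, item 1: under (H1) and (H3), if `u*` and `v*` are amenable complete
trajectories at the same `q`, then `V(u*(t) − v*(t)) ≤ 0` for all `t`. -/
theorem amenable_trajectories_nonpositive_V
    {Q H : Type*} [MetricSpace Q] [NormedAddCommGroup H] [InnerProductSpace ℝ H]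
    [CompleteSpace H] [TopologicalSpace.SeparableSpace H]
    (ϑ : ℝ → Q → Q) (ψ : ℝ → Q → H → H)
    (hflow : IsFlow ϑ) (hcoc : IsCocycle ϑ ψ)
    (P : H →L[ℝ] H) (Hplus Hminus : Submodule ℝ H)
    (h1 : HypH1 P Hplus Hminus)
    (δ ν : ℝ) (h3 : HypH3 ψ P δ ν)
    (q : Q) (u v : ℝ → H)
    (hu : IsCompleteTraj ϑ ψ q u) (hua : IsAmenable ν u)
    (hv : IsCompleteTraj ϑ ψ q v) (hva : IsAmenable ν v) :
    ∀ t : ℝ, ⟪P (u t - v t), u t - v t⟫ ≤ 0 :=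
  amenable_trajectories_nonpositive_V_general ϑ ψ P δ ν h3 q u v hu hua hv hva
end
end

section
/- Suppose the cocycle (ψ,ϑ) is σ-periodic and (H1), (H2) with j = 1 and (H3) hold. Let u(t) := ψ^t(q,u₀), t ≥ 0, be a semi-trajectory that remains in a compact subset K ⊂ H for all t ≥ 0. Then u(t) − u(t + σ) → 0 as t → +∞. -/
/-!
Put `v = ψ^σ(q, u₀)`; periodicity of the base gives `u(t + σ) = ψ^t(q, v)`, so
`w(t) = u(t) - u(t + σ)` is a difference of two semi-trajectories in `K`: it stays in a compact
set, it is uniformly continuous, and by (H3) `e^{2νt} V(w(t))` is nonincreasing.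

If `V(w(t)) ≥ 0` for all `t`, (H3) bounds `∫₀^∞ |w|²`, and Barbalat's lemma gives `w → 0`.
Otherwise `V(w(t)) < 0` from some `t₀` on. Writing `H⁻ = ℝ e`, a vector with `V < 0` is not
orthogonal to `e`, so `⟪e, w(t)⟫` has a fixed sign; since `⟪e, w(s)⟫ = f(s) - f(s + σ)` with
`f = ⟪e, u⟫` bounded, its integral stays bounded and Barbalat's lemma gives `⟪e, w⟫ → 0`.
A limit point `x` of `w` then has `⟪e, x⟫ = 0`, i.e. `x ∈ H⁺`, and `V(x) ≤ 0`, so `x = 0`.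
-/

open MeasureTheory Set Bornology Filter Topology RealInnerProductSpace

noncomputable section

variable {Q H : Type*}

theorem ContinuousOn.intervalIntegrable_of_Ici {E : Type*} [NormedAddCommGroup E] {f : ℝ → E}
    {a x y : ℝ} (hf : ContinuousOn f (Ici a)) (hx : a ≤ x) (hy : a ≤ y) :
    IntervalIntegrable f volume x y :=
  (hf.mono fun _ hz => (le_min hx hy).trans hz.1).intervalIntegrable

/-- Barbalat's lemma. -/
theorem tendsto_zero_of_uniformContinuousOn_of_integral_le {h : ℝ → ℝ} {a C : ℝ}
    (huc : UniformContinuousOn h (Ici a)) (hnn : ∀ t ≥ a, 0 ≤ h t)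
    (hint : ∀ T ≥ a, ∫ s in a..T, h s ≤ C) : Tendsto h atTop (𝓝 0) := by
  have hcont : ContinuousOn h (Ici a) := huc.continuousOn
  have hIoi : IntegrableOn h (Ioi a) := by
    refine integrableOn_Ioi_of_intervalIntegral_norm_bounded C a
      (fun T => (hcont.mono Icc_subset_Ici_self).integrableOn_Icc.mono_set Ioc_subset_Icc_self)
      tendsto_id ((eventually_ge_atTop a).mono fun T hT => ?_)
    change ∫ s in a..T, ‖h s‖ ≤ C
    rw [intervalIntegral.integral_congr fun s hs =>
      Real.norm_of_nonneg (hnn s ((le_min le_rfl hT).trans hs.1))]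
    exact hint T hT
  have hwindow : ∀ η ≥ 0, Tendsto (fun t => ∫ s in t..t + η, h s) atTop (𝓝 0) := by
    intro η hη
    have hG := intervalIntegral_tendsto_integral_Ioi a hIoi tendsto_id
    have := (hG.comp (tendsto_atTop_add_const_right _ η tendsto_id)).sub hG
    rw [sub_self] at this
    refine this.congr' ((eventually_ge_atTop a).mono fun t ht => ?_)
    exact intervalIntegral.integral_interval_sub_left
      (hcont.intervalIntegrable_of_Ici le_rfl (show a ≤ t + η by linarith))
      (hcont.intervalIntegrable_of_Ici le_rfl ht)
  refine tendsto_order.2 ⟨fun b hb => (eventually_ge_atTop a).mono fun t ht =>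
    hb.trans_le (hnn t ht), fun ε hε => ?_⟩
  obtain ⟨η, hη, hclose⟩ := Metric.uniformContinuousOn_iff.1 huc (ε / 2) (half_pos hε)
  filter_upwards [eventually_ge_atTop a, (hwindow (η / 2) (by positivity)).eventually
    (gt_mem_nhds (by positivity : 0 < η / 2 * (ε / 2)))] with t ht hsmall
  by_contra! hbig
  have hlarge : ∀ s ∈ Icc t (t + η / 2), ε / 2 ≤ h s := by
    intro s hs
    have hd : dist s t < η := by
      rw [Real.dist_eq, abs_of_nonneg (by linarith [hs.1])]
      linarith [hs.2]
    have := hclose s (ht.trans hs.1) t ht hd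
    rw [Real.dist_eq] at this
    linarith [abs_lt.1 this]
  have := intervalIntegral.integral_mono_on (by linarith) intervalIntegrable_const
    (hcont.intervalIntegrable_of_Ici ht (by linarith)) hlarge
  simp only [intervalIntegral.integral_const, smul_eq_mul, add_sub_cancel_left] at this
  linarith

theorem intervalIntegral.integral_le_of_eq_sub_comp_add {f g : ℝ → ℝ} {a T σ M : ℝ}
    (hσ : 0 ≤ σ) (haT : a ≤ T) (hf : ContinuousOn f (Ici a)) (hM : ∀ s ≥ a, |f s| ≤ M)
    (hg : ∀ s ≥ a, g s = f s - f (s + σ)) :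
    ∫ s in a..T, g s ≤ 2 * σ * M := by
  have hwindow : ∀ x ≥ a, |∫ s in x..x + σ, f s| ≤ M * σ := fun x hx => by
    have := intervalIntegral.norm_integral_le_of_norm_le_const (a := x) (b := x + σ) (f := f)
      fun s hs => (Real.norm_eq_abs _).trans_le
        (hM s (hx.trans (by rw [uIoc_of_le (by linarith)] at hs; exact hs.1.le)))
    rwa [Real.norm_eq_abs, add_sub_cancel_left, abs_of_nonneg hσ] at this
  -- Shifting by `σ` telescopes the integral to two windows of length `σ`.
  have hshift : ∫ s in a..T, g s = (∫ s in a..a + σ, f s) - ∫ s in T..T + σ, f s := by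
    rw [intervalIntegral.integral_congr fun s hs => hg s ((le_min le_rfl haT).trans hs.1),
      intervalIntegral.integral_sub (hf.intervalIntegrable_of_Ici le_rfl haT)
        (by simpa using (hf.intervalIntegrable_of_Ici (x := a + σ) (y := T + σ)
          (by linarith) (by linarith)).comp_add_right σ),
      intervalIntegral.integral_comp_add_right,
      intervalIntegral.integral_interval_sub_interval_comm'
        (hf.intervalIntegrable_of_Ici le_rfl haT) (hf.intervalIntegrable_of_Ici
          (by linarith) (by linarith)) (hf.intervalIntegrable_of_Ici le_rfl (by linarith)),
      intervalIntegral.integral_symm T, intervalIntegral.integral_symm a]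
    ring
  rw [hshift]
  linarith [abs_le.1 (hwindow a le_rfl), abs_le.1 (hwindow T haT)]

theorem pos_of_continuousOn_Ici_of_ne_zero {f : ℝ → ℝ} {a t : ℝ} (hf : ContinuousOn f (Ici a))
    (hne : ∀ s ≥ a, f s ≠ 0) (ha : 0 < f a) (ht : a ≤ t) : 0 < f t := by
  by_contra! hle
  obtain ⟨s, hs, hs0⟩ := isPreconnected_Ici.intermediate_value (mem_Ici.2 ht) self_mem_Ici hf
    ⟨hle, ha.le⟩
  exact hne s hs hs0

theorem UniformContinuousOn.sub {α E : Type*} [UniformSpace α] [UniformSpace E] [AddGroup E]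
    [IsUniformAddGroup E] {s : Set α} {f g : α → E}
    (hf : UniformContinuousOn f s) (hg : UniformContinuousOn g s) :
    UniformContinuousOn (fun t => f t - g t) s :=
  uniformContinuousOn_iff_restrict.2 <|
    (uniformContinuousOn_iff_restrict.1 hf).sub (uniformContinuousOn_iff_restrict.1 hg)

theorem IsCocycle.uniformContinuousOn_of_mapsTo [MetricSpace Q] [CompactSpace Q]
    [NormedAddCommGroup H] {ϑ : ℝ → Q → Q} {ψ : ℝ → Q → H → H} (hψ : IsCocycle ϑ ψ)
    {K : Set H} (hK : IsCompact K) {q : Q} {u : H} (hmem : ∀ t ≥ 0, ψ t q u ∈ K) :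
    UniformContinuousOn (fun t => ψ t q u) (Ici 0) := by
  obtain ⟨hψ₀, hcoc, hcont⟩ := hψ
  have huc := (isCompact_Icc.prod (isCompact_univ.prod hK)).uniformContinuousOn_of_continuous
    (hcont.mono fun p hp => hp.1.1 : ContinuousOn _ (Icc (0 : ℝ) 1 ×ˢ (univ ×ˢ K)))
  rw [Metric.uniformContinuousOn_iff] at huc ⊢
  intro ε hε
  obtain ⟨η, hη, hclose⟩ := huc ε hε
  -- `ψ (s + t) q u = ψ s (ϑ t q) (ψ t q u)` is uniformly close to `ψ 0 (ϑ t q) (ψ t q u)`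
  have hstep : ∀ t ≥ 0, ∀ s ∈ Icc (0 : ℝ) 1, s < η → dist (ψ (s + t) q u) (ψ t q u) < ε := by
    intro t ht s hs hsη
    have hd := hclose (s, ϑ t q, ψ t q u) ⟨hs, trivial, hmem t ht⟩ (0, ϑ t q, ψ t q u)
      ⟨⟨le_rfl, zero_le_one⟩, trivial, hmem t ht⟩
      (by simpa [Prod.dist_eq, Real.dist_eq, abs_of_nonneg hs.1] using ⟨hsη, hη⟩)
    rwa [hψ₀, ← hcoc s t hs.1 ht] at hd
  refine ⟨min η 1, by positivity, fun x hx y hy hxy => ?_⟩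
  have hxy' : |x - y| < min η 1 := by rwa [← Real.dist_eq]
  rcases le_total x y with h | h
  · rw [dist_comm, ← sub_add_cancel y x]
    exact hstep x hx _ ⟨by linarith, by linarith [abs_lt.1 hxy', min_le_right η 1]⟩
      (by linarith [abs_lt.1 hxy', min_le_left η 1])
  · rw [← sub_add_cancel x y]
    exact hstep y hy _ ⟨by linarith, by linarith [abs_lt.1 hxy', min_le_right η 1]⟩
      (by linarith [abs_lt.1 hxy', min_le_left η 1])

theorem IsCocycle.apply_add_period [NormedAddCommGroup H] {σ : ℝ}
    {ψ : ℝ → AddCircle σ → H → H} (hψ : IsCocycle (circleFlow σ) ψ) (hσ : 0 ≤ σ) {t : ℝ}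
    (ht : 0 ≤ t) (q : AddCircle σ) (u : H) :
    ψ (t + σ) q u = ψ t q (ψ σ q u) := by
  rw [hψ.2.1 t σ ht hσ q u, circleFlow, AddCircle.coe_period, add_zero]

section Lyapunov

variable [NormedAddCommGroup H] [InnerProductSpace ℝ H]

/-- The inequality of (H3) along a single function `w`, with `V u = ⟪P u, u⟫`. -/
def HasLyapunovDecay (P : H →L[ℝ] H) (δ ν : ℝ) (w : ℝ → H) : Prop :=
  ∀ l r : ℝ, 0 ≤ l → l ≤ r →
    Real.exp (2 * ν * r) * ⟪P (w r), w r⟫ - Real.exp (2 * ν * l) * ⟪P (w l), w l⟫ ≤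
      -δ * ∫ s in l..r, Real.exp (2 * ν * s) * ‖w s‖ ^ 2

theorem HypH3.hasLyapunovDecay {ψ : ℝ → Q → H → H} {P : H →L[ℝ] H} {δ ν : ℝ}
    (h3 : HypH3 ψ P δ ν) (q : Q) (u v : H) :
    HasLyapunovDecay P δ ν (fun t => ψ t q u - ψ t q v) :=
  h3.2.2 q u v

namespace HasLyapunovDecay

variable {P : H →L[ℝ] H} {δ ν : ℝ} {w : ℝ → H}

theorem antitoneOn (hw : HasLyapunovDecay P δ ν w) (hδ : 0 ≤ δ) :
    AntitoneOn (fun t => Real.exp (2 * ν * t) * ⟪P (w t), w t⟫) (Ici 0) := by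
  intro l hl r _ hlr
  have := hw l r hl hlr
  have : 0 ≤ ∫ s in l..r, Real.exp (2 * ν * s) * ‖w s‖ ^ 2 :=
    intervalIntegral.integral_nonneg hlr fun s _ => by positivity
  nlinarith

theorem inner_neg_of_le (hw : HasLyapunovDecay P δ ν w) (hδ : 0 ≤ δ) {t₀ t : ℝ} (ht₀ : 0 ≤ t₀)
    (hneg : ⟪P (w t₀), w t₀⟫ < 0) (ht : t₀ ≤ t) : ⟪P (w t), w t⟫ < 0 := by
  have := hw.antitoneOn hδ ht₀ (ht₀.trans ht) ht
  simp only at this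
  by_contra! hnn
  nlinarith [Real.exp_pos (2 * ν * t), Real.exp_pos (2 * ν * t₀)]

theorem integral_norm_sq_le (hw : HasLyapunovDecay P δ ν w) (hδ : 0 < δ) (hν : 0 ≤ ν)
    (hcont : ContinuousOn w (Ici 0)) {T : ℝ} (hT : 0 ≤ T) (hV : 0 ≤ ⟪P (w T), w T⟫) :
    ∫ s in 0..T, ‖w s‖ ^ 2 ≤ ⟪P (w 0), w 0⟫ / δ := by
  have hweight : ∫ s in 0..T, ‖w s‖ ^ 2 ≤ ∫ s in 0..T, Real.exp (2 * ν * s) * ‖w s‖ ^ 2 := by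
    refine intervalIntegral.integral_mono_on hT
      ((hcont.norm.pow 2).intervalIntegrable_of_Ici le_rfl hT)
      (((Real.continuous_exp.comp (continuous_const.mul continuous_id)).continuousOn.mul
        (hcont.norm.pow 2)).intervalIntegrable_of_Ici le_rfl hT) fun s hs => ?_
    exact le_mul_of_one_le_left (by positivity) (Real.one_le_exp (by nlinarith [hs.1]))
  have := hw 0 T le_rfl hT
  rw [mul_zero, Real.exp_zero, one_mul] at this
  rw [le_div_iff₀ hδ]
  nlinarith [Real.exp_pos (2 * ν * T)]

theorem tendsto_zero_of_nonneg (hw : HasLyapunovDecay P δ ν w) (hδ : 0 < δ) (hν : 0 ≤ ν)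
    {L : Set H} (hL : IsCompact L) (hwL : MapsTo w (Ici 0) L)
    (huc : UniformContinuousOn w (Ici 0)) (hV : ∀ t ≥ 0, 0 ≤ ⟪P (w t), w t⟫) :
    Tendsto w atTop (𝓝 0) := by
  have hsq : Tendsto (fun t => ‖w t‖ ^ 2) atTop (𝓝 0) :=
    tendsto_zero_of_uniformContinuousOn_of_integral_le
      ((hL.uniformContinuousOn_of_continuous (continuous_norm.pow 2).continuousOn).comp huc hwL)
      (fun t _ => by positivity)
      fun T hT => hw.integral_norm_sq_le hδ hν huc.continuousOn hT (hV T hT)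
  rw [tendsto_zero_iff_norm_tendsto_zero]
  simpa using hsq.sqrt

end HasLyapunovDecay

end Lyapunov

theorem HypH2.exists_eq_span_singleton [NormedAddCommGroup H] [InnerProductSpace ℝ H]
    {Hminus : Submodule ℝ H} (h2 : HypH2 Hminus 1) : ∃ e : H, Hminus = ℝ ∙ e := by
  obtain ⟨e, he, he0⟩ := Hminus.exists_mem_ne_zero_of_ne_bot fun hbot => by
    have h := h2.2
    rw [hbot, finrank_bot] at h
    exact zero_ne_one h
  exact ⟨e, eq_span_singleton_of_mem_of_finrank_eq_one h2.2 he he0⟩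

namespace HypH1

variable [NormedAddCommGroup H] [InnerProductSpace ℝ H] [CompleteSpace H]
  {P : H →L[ℝ] H} {Hplus Hminus : Submodule ℝ H}

theorem orthogonal_eq (h1 : HypH1 P Hplus Hminus) : Hminusᗮ = Hplus := by
  have := h1.closed_plus.completeSpace_coe
  rw [h1.orth, Submodule.orthogonal_orthogonal]

theorem eq_zero_of_mem_orthogonal (h1 : HypH1 P Hplus Hminus) {x : H} (hx : x ∈ Hminusᗮ)
    (hV : ⟪P x, x⟫ ≤ 0) : x = 0 := by
  by_contra hx0
  exact (h1.pos x (h1.orthogonal_eq ▸ hx) hx0).not_ge hV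

theorem exists_eq_span_singleton_inner_pos (h1 : HypH1 P Hplus Hminus) (h2 : HypH2 Hminus 1)
    {x : H} (hV : ⟪P x, x⟫ < 0) : ∃ e : H, Hminus = ℝ ∙ e ∧ 0 < ⟪e, x⟫ := by
  obtain ⟨e, he⟩ := h2.exists_eq_span_singleton
  have hex : ⟪e, x⟫ ≠ 0 := fun h0 => by
    have hx : x ∈ Hminusᗮ := by rwa [he, Submodule.mem_orthogonal_singleton_iff_inner_right]
    simp [h1.eq_zero_of_mem_orthogonal hx hV.le] at hV
  rcases hex.lt_or_gt with hneg | hpos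
  · refine ⟨-e, ?_, by rwa [inner_neg_left, neg_pos]⟩
    rw [he, ← Set.neg_singleton, Submodule.span_neg]
  · exact ⟨e, he, hpos⟩

theorem tendsto_zero_of_inner_tendsto_zero (h1 : HypH1 P Hplus Hminus) {e : H}
    (he : Hminus = ℝ ∙ e) {ι : Type*} {l : Filter ι} {w : ι → H} {L : Set H} (hL : IsCompact L)
    (hwL : ∀ᶠ t in l, w t ∈ L) (hV : ∀ᶠ t in l, ⟪P (w t), w t⟫ ≤ 0)
    (hlim : Tendsto (fun t => ⟪e, w t⟫) l (𝓝 0)) : Tendsto w l (𝓝 0) := by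
  refine hL.tendsto_nhds_of_unique_mapClusterPt hwL fun x _ hx =>
    h1.eq_zero_of_mem_orthogonal ?_ ?_
  · rw [he, Submodule.mem_orthogonal_singleton_iff_inner_right]
    exact eq_of_nhds_neBot
      ((hx.continuousAt_comp (continuous_const.inner continuous_id).continuousAt).clusterPt.mono
        hlim)
  · have hclosed : IsClosed {y : H | ⟪P y, y⟫ ≤ 0} := isClosed_le (by fun_prop) continuous_const
    exact hclosed.mem_of_mapClusterPt hx hV

theorem tendsto_zero_of_integral_inner_le (h1 : HypH1 P Hplus Hminus) {e : H}
    (he : Hminus = ℝ ∙ e) {w : ℝ → H} {a C : ℝ} {L : Set H} (hL : IsCompact L)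
    (hwL : MapsTo w (Ici a) L) (huc : UniformContinuousOn w (Ici a))
    (hV : ∀ t ≥ a, ⟪P (w t), w t⟫ < 0) (hpos : 0 < ⟪e, w a⟫)
    (hint : ∀ T ≥ a, ∫ s in a..T, ⟪e, w s⟫ ≤ C) : Tendsto w atTop (𝓝 0) := by
  have hcont : ContinuousOn (fun t => ⟪e, w t⟫) (Ici a) :=
    continuousOn_const.inner huc.continuousOn
  have hne : ∀ t ≥ a, ⟪e, w t⟫ ≠ 0 := fun t ht h0 => by
    have hx : w t ∈ Hminusᗮ := by rwa [he, Submodule.mem_orthogonal_singleton_iff_inner_right]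
    simpa [h1.eq_zero_of_mem_orthogonal hx (hV t ht).le] using hV t ht
  have hlim : Tendsto (fun t => ⟪e, w t⟫) atTop (𝓝 0) :=
    tendsto_zero_of_uniformContinuousOn_of_integral_le
      ((hL.uniformContinuousOn_of_continuous
        (continuous_const.inner continuous_id).continuousOn).comp huc hwL)
      (fun t ht => (pos_of_continuousOn_Ici_of_ne_zero hcont hne hpos ht).le) hint
  exact h1.tendsto_zero_of_inner_tendsto_zero he hL
    ((eventually_ge_atTop a).mono fun t ht => hwL ht)
    ((eventually_ge_atTop a).mono fun t ht => (hV t ht).le) hlim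

end HypH1

theorem asymptotic_sigma_periodicity_general
    {H : Type*} [NormedAddCommGroup H] [InnerProductSpace ℝ H]
    [CompleteSpace H]
    (σ : ℝ) (hσ : 0 < σ)
    (ψ : ℝ → AddCircle σ → H → H)
    (hcoc : IsCocycle (circleFlow σ) ψ)
    (P : H →L[ℝ] H) (Hplus Hminus : Submodule ℝ H)
    (h1 : HypH1 P Hplus Hminus)
    (h2 : HypH2 Hminus 1)
    (δ ν : ℝ) (h3 : HypH3 ψ P δ ν)
    (q : AddCircle σ) (u₀ : H) (K : Set H) (hK : IsCompact K)
    (hKmem : ∀ t : ℝ, 0 ≤ t → ψ t q u₀ ∈ K) :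
    Tendsto (fun t : ℝ => ψ t q u₀ - ψ (t + σ) q u₀) atTop (𝓝 0) := by
  have : Fact (0 < σ) := ⟨hσ⟩
  have hshift : ∀ t ≥ 0, ψ (t + σ) q u₀ = ψ t q (ψ σ q u₀) := fun t ht =>
    hcoc.apply_add_period hσ.le ht q u₀
  have hvK : ∀ t ≥ 0, ψ t q (ψ σ q u₀) ∈ K := fun t ht => hshift t ht ▸ hKmem _ (by positivity)
  have hu := hcoc.uniformContinuousOn_of_mapsTo hK hKmem
  set w : ℝ → H := fun t => ψ t q u₀ - ψ t q (ψ σ q u₀)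
  have huc : UniformContinuousOn w (Ici 0) := hu.sub (hcoc.uniformContinuousOn_of_mapsTo hK hvK)
  obtain ⟨L, hL, hwL⟩ : ∃ L, IsCompact L ∧ MapsTo w (Ici 0) L :=
    ⟨_, (hK.prod hK).image continuous_sub, fun t ht => ⟨(_, _), ⟨hKmem t ht, hvK t ht⟩, rfl⟩⟩
  have hdecay := h3.hasLyapunovDecay q u₀ (ψ σ q u₀)
  suffices Tendsto w atTop (𝓝 0) from
    this.congr' <| (eventually_ge_atTop 0).mono fun t ht => by simp [w, hshift t ht]
  by_cases hV : ∀ t ≥ 0, 0 ≤ ⟪P (w t), w t⟫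
  · exact hdecay.tendsto_zero_of_nonneg h3.1 h3.2.1.le hL hwL huc hV
  push Not at hV
  obtain ⟨t₀, ht₀, hneg⟩ := hV
  obtain ⟨e, he, hpos⟩ := h1.exists_eq_span_singleton_inner_pos h2 hneg
  obtain ⟨M, hM⟩ := hK.isBounded.exists_norm_le
  exact h1.tendsto_zero_of_integral_inner_le he hL (hwL.mono_left (Ici_subset_Ici.2 ht₀))
    (huc.mono (Ici_subset_Ici.2 ht₀)) (fun t ht => hdecay.inner_neg_of_le h3.1.le ht₀ hneg ht)
    hpos fun T hT => intervalIntegral.integral_le_of_eq_sub_comp_add hσ.le hT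
      (continuousOn_const.inner (hu.continuousOn.mono (Ici_subset_Ici.2 ht₀)))
      (fun s hs => (abs_real_inner_le_norm _ _).trans
        (mul_le_mul_of_nonneg_left (hM _ (hKmem s (ht₀.trans hs))) (norm_nonneg e)))
      fun s hs => by simp only [w, hshift s (ht₀.trans hs), inner_sub_right]

/-- Lemma 5, item 3: for a σ-periodic cocycle under (H1), (H2) with `j = 1` and (H3),
any semi-trajectory remaining in a compact set satisfies `u(t) − u(t+σ) → 0` as
`t → +∞`. -/
theorem asymptotic_sigma_periodicity
    {H : Type*} [NormedAddCommGroup H] [InnerProductSpace ℝ H]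
    [CompleteSpace H] [TopologicalSpace.SeparableSpace H]
    (σ : ℝ) (hσ : 0 < σ)
    (ψ : ℝ → AddCircle σ → H → H)
    (hcoc : IsCocycle (circleFlow σ) ψ)
    (P : H →L[ℝ] H) (Hplus Hminus : Submodule ℝ H)
    (h1 : HypH1 P Hplus Hminus)
    (h2 : HypH2 Hminus 1)
    (δ ν : ℝ) (h3 : HypH3 ψ P δ ν)
    (q : AddCircle σ) (u₀ : H) (K : Set H) (hK : IsCompact K)
    (hKmem : ∀ t : ℝ, 0 ≤ t → ψ t q u₀ ∈ K) :
    Tendsto (fun t : ℝ => ψ t q u₀ - ψ (t + σ) q u₀) atTop (𝓝 0) :=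
  asymptotic_sigma_periodicity_general σ hσ ψ hcoc P Hplus Hminus h1 h2 δ ν h3 q u₀ K hK hKmem
end
end
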